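/- arXiv:2205.00588 — 4 statements merged into one kernel-verified Lean document; each statement's English description precedes it below -/
import Mathlib

section
/- Fix integers k ≥ 1 and n > k. Then both inf over all m ≥ 1 and type distributions G over m types for n agents of sup_{J,ρ} innerLP^{OST(J,ρ)/Proph}_{k,n}(G), and the same infimum with innerLP^{OST(J,ρ)/ExAnte}_{k,n}(G) in place of innerLP^{OST(J,ρ)/Proph}_{k,n}(G), are equal to inf{α : there exist q_1, ..., q_{n-1} ∈ [0,1] such that α = P(Σ_{i=1}^{n-1} X_i < k) = E[min{Σ_{i=1}^{n-1} X_i, k}]/k, where X_1, ..., X_{n-1} are independent Bernoulli random variables with P(X_i = 1) = q_i}. -/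
/-!
Fix the threshold `τ = τ(J, ρ)`. The constraint `y = τ x` determines `x ∈ P(k,n)` uniquely: it
is the vector of state probabilities of the policy that accepts agent `i` with probability `τ i`
while items remain. Writing `A_i` for the number of acceptances among the first `i` agents when
all of them are accepted independently with probabilities `τ`, the inner LP is therefore the
largest `θ` with `θ Q_j ≤ ∑ᵢ min(τᵢ, G_ij) P(A_{i-1} < k)` for all `j`.

Lower bound: along the path `τ(J, ρ)` through the columns of `G` the continuous quantity
`𝔼[min(A_{n-1}, k)] - k P(A_{n-1} < k)` moves from `-k` to `k`, so it vanishes somewhere. There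
`θ = P(A_{n-1} < k)` is feasible and belongs to the Bernoulli set.

Upper bound: given a point `q` of the Bernoulli set with value `α`, take `n - 1` agents of type
`2` with probabilities `q i`, followed by one agent of the best type `1` with small probability
`δ`. A threshold with `J ≤ 2` accepts agent `i < n` with probability at most `q i`, and the
constraint for `j = 3` gives `kθ ≤ 𝔼[min(A_n, k)] ≤ kα + δ`; for `J = 3` it accepts them with
probability at least `q i`, and the constraint for `j = 1` gives `θ ≤ P(A_{n-1} < k) ≤ α`.
-/

open Finset

/-- The polytope `P(k,n)` of state/acceptance probability vectors. -/
def memP (k n : ℕ) (x y : ℕ → ℕ → ℝ) : Prop :=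
  x 1 k = 1 ∧
  (∀ l, 1 ≤ l → l < k → x 1 l = 0) ∧
  (∀ i ∈ Finset.Icc 2 n, ∀ l ∈ Finset.Icc 1 k,
    x i l = x (i-1) l - y (i-1) l + (if l < k then y (i-1) (l+1) else 0)) ∧
  (∀ i ∈ Finset.Icc 1 n, ∀ l ∈ Finset.Icc 1 k, 0 ≤ y i l ∧ y i l ≤ x i l)

/-- `G` is a valid family of type distributions over `m` types for `n` agents. -/
def IsTypeDist (n m : ℕ) (G : ℕ → ℕ → ℝ) : Prop :=
  ∀ i ∈ Finset.Icc 1 n, G i 0 = 0 ∧ G i m = 1 ∧ ∀ j ∈ Finset.Icc 1 m, G i (j-1) ≤ G i j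

/-- `E[min{X_1+...+X_t, k}]` for independent Bernoulli `X_i` with success probabilities `p i`. -/
noncomputable def eMinBer (p : ℕ → ℝ) (t k : ℕ) : ℝ :=
  ∑ S ∈ (Finset.Icc 1 t).powerset,
    (∏ i ∈ S, p i) * (∏ i ∈ Finset.Icc 1 t \ S, (1 - p i)) * min (S.card : ℝ) (k : ℝ)

/-- `P(X_1+...+X_t < k)` for independent Bernoulli `X_i` with success probabilities `p i`. -/
noncomputable def probLt (p : ℕ → ℝ) (t k : ℕ) : ℝ :=
  ∑ S ∈ (Finset.Icc 1 t).powerset.filter (fun S => S.card < k),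
    (∏ i ∈ S, p i) * ∏ i ∈ Finset.Icc 1 t \ S, (1 - p i)

noncomputable def QProph (k n : ℕ) (G : ℕ → ℕ → ℝ) (j : ℕ) : ℝ :=
  eMinBer (fun i => G i j) n k

noncomputable def QExAnte (k n : ℕ) (G : ℕ → ℕ → ℝ) (j : ℕ) : ℝ :=
  min (∑ i ∈ Finset.Icc 1 n, G i j) (k : ℝ)

noncomputable def coverSum (k n : ℕ) (G : ℕ → ℕ → ℝ) (j : ℕ) (x y : ℕ → ℕ → ℝ) : ℝ :=
  ∑ i ∈ Finset.Icc 1 n, ∑ l ∈ Finset.Icc 1 k, min (y i l) (G i j * x i l)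

/-- `τ_i(J,ρ)`. -/
noncomputable def tauOf (G : ℕ → ℕ → ℝ) (J : ℕ) (ρ : ℝ) (i : ℕ) : ℝ :=
  (1 - ρ) * G i (J-1) + ρ * G i J

/-- The simplified dual LP `innerLP^{OST(J,ρ)/·}_{k,n}(G)` with coefficients `Q`. -/
noncomputable def innerLP_OST (k n m : ℕ) (G : ℕ → ℕ → ℝ) (J : ℕ) (ρ : ℝ) (Q : ℕ → ℝ) : ℝ :=
  sSup {θ : ℝ | ∃ x y, memP k n x y ∧
    (∀ i ∈ Finset.Icc 1 n, ∀ l ∈ Finset.Icc 1 k, y i l = tauOf G J ρ i * x i l) ∧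
    ∀ j ∈ Finset.Icc 1 m, θ * Q j ≤ coverSum k n G j x y}

noncomputable def bernWeight (p : ℕ → ℝ) (T S : Finset ℕ) : ℝ :=
  (∏ i ∈ S, p i) * ∏ i ∈ T \ S, (1 - p i)

/-- `bernExp p T f = 𝔼[f (∑ i ∈ T, X i)]` for independent `X i ~ Bernoulli (p i)`. -/
noncomputable def bernExp (p : ℕ → ℝ) (T : Finset ℕ) (f : ℕ → ℝ) : ℝ :=
  ∑ S ∈ T.powerset, bernWeight p T S * f S.card

section BernExp

variable {p q : ℕ → ℝ} {T : Finset ℕ} {f g : ℕ → ℝ}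

@[simp]
lemma bernExp_empty (p : ℕ → ℝ) (f : ℕ → ℝ) : bernExp p ∅ f = f 0 := by
  simp [bernExp, bernWeight]

lemma bernExp_insert {a : ℕ} (ha : a ∉ T) (p : ℕ → ℝ) (f : ℕ → ℝ) :
    bernExp p (insert a T) f =
      p a * bernExp p T (fun c => f (c + 1)) + (1 - p a) * bernExp p T f := by
  rw [bernExp, sum_powerset_insert ha, add_comm, bernExp, bernExp, mul_sum, mul_sum]
  congr 1 <;> refine sum_congr rfl fun S hS => ?_ <;>
    have haS : a ∉ S := fun h => ha (mem_powerset.mp hS h)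
  · rw [bernWeight, bernWeight, insert_sdiff_insert, sdiff_insert_of_notMem ha,
      prod_insert haS, card_insert_of_notMem haS]
    ring
  · have haTS : a ∉ T \ S := fun h => ha (mem_sdiff.mp h).1
    rw [bernWeight, bernWeight, insert_sdiff_of_notMem _ haS, prod_insert haTS]
    ring

lemma bernExp_singleton (a : ℕ) (p : ℕ → ℝ) (f : ℕ → ℝ) :
    bernExp p {a} f = p a * f 1 + (1 - p a) * f 0 := by
  rw [← insert_empty, bernExp_insert (notMem_empty a)]
  simp

lemma bernExp_congr (h : ∀ c, f c = g c) : bernExp p T f = bernExp p T g := by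
  simp only [funext h]

lemma bernExp_add (p : ℕ → ℝ) (T : Finset ℕ) (f g : ℕ → ℝ) :
    bernExp p T (fun c => f c + g c) = bernExp p T f + bernExp p T g := by
  simp only [bernExp, mul_add, sum_add_distrib]

lemma bernExp_neg (p : ℕ → ℝ) (T : Finset ℕ) (f : ℕ → ℝ) :
    bernExp p T (fun c => -f c) = -bernExp p T f := by
  simp only [bernExp, mul_neg, sum_neg_distrib]

lemma bernExp_sum (p : ℕ → ℝ) (T A : Finset ℕ) (f : ℕ → ℕ → ℝ) :
    bernExp p T (fun c => ∑ l ∈ A, f l c) = ∑ l ∈ A, bernExp p T (f l) := by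
  simp only [bernExp, mul_sum]
  exact sum_comm

lemma bernExp_const (p : ℕ → ℝ) (T : Finset ℕ) (c : ℝ) : bernExp p T (fun _ => c) = c := by
  induction T using Finset.induction_on with
  | empty => simp
  | insert a T ha ih => rw [bernExp_insert ha, ih]; ring

lemma bernExp_natCast (p : ℕ → ℝ) (T : Finset ℕ) :
    bernExp p T (fun c => (c : ℝ)) = ∑ i ∈ T, p i := by
  induction T using Finset.induction_on with
  | empty => simp
  | insert a T ha ih =>
    simp only [bernExp_insert ha, sum_insert ha, Nat.cast_add, Nat.cast_one,
      bernExp_add, bernExp_const, ih]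
    ring

lemma bernExp_of_forall_eq_zero (h : ∀ i ∈ T, p i = 0) (f : ℕ → ℝ) :
    bernExp p T f = f 0 := by
  induction T using Finset.induction_on with
  | empty => simp
  | insert a T ha ih =>
    rw [bernExp_insert ha, h a (mem_insert_self a T),
      ih fun i hi => h i (mem_insert_of_mem hi)]
    ring

lemma bernExp_of_forall_eq_one (h : ∀ i ∈ T, p i = 1) (f : ℕ → ℝ) :
    bernExp p T f = f T.card := by
  induction T using Finset.induction_on generalizing f with
  | empty => simp
  | insert a T ha ih =>
    rw [bernExp_insert ha, h a (mem_insert_self a T),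
      ih (fun i hi => h i (mem_insert_of_mem hi)), card_insert_of_notMem ha]
    ring

lemma continuous_bernExp {P : ℝ → ℕ → ℝ} (hP : ∀ i, Continuous fun s => P s i)
    (T : Finset ℕ) (f : ℕ → ℝ) : Continuous fun s => bernExp (P s) T f := by
  unfold bernExp bernWeight
  fun_prop

lemma bernExp_mono (hp : ∀ i ∈ T, p i ∈ Set.Icc (0 : ℝ) 1) (h : ∀ c, f c ≤ g c) :
    bernExp p T f ≤ bernExp p T g := by
  refine sum_le_sum fun S hS => mul_le_mul_of_nonneg_left (h _) ?_
  have hST := mem_powerset.mp hS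
  exact mul_nonneg (prod_nonneg fun i hi => (hp i (hST hi)).1)
    (prod_nonneg fun i hi => sub_nonneg.2 (hp i (mem_sdiff.mp hi).1).2)

lemma bernExp_nonneg (hp : ∀ i ∈ T, p i ∈ Set.Icc (0 : ℝ) 1) (h : ∀ c, 0 ≤ f c) :
    0 ≤ bernExp p T f := by
  simpa only [bernExp_const] using bernExp_mono hp (f := fun _ => 0) h

lemma bernExp_le_const (hp : ∀ i ∈ T, p i ∈ Set.Icc (0 : ℝ) 1) {B : ℝ} (h : ∀ c, f c ≤ B) :
    bernExp p T f ≤ B := by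
  simpa only [bernExp_const] using bernExp_mono hp (g := fun _ => B) h

lemma bernExp_le_bernExp_of_le (hf : Monotone f) (hp : ∀ i ∈ T, p i ∈ Set.Icc (0 : ℝ) 1)
    (hq : ∀ i ∈ T, q i ∈ Set.Icc (0 : ℝ) 1) (hpq : ∀ i ∈ T, p i ≤ q i) :
    bernExp p T f ≤ bernExp q T f := by
  induction T using Finset.induction_on generalizing f with
  | empty => simp
  | insert a T ha ih =>
    have hpT := fun i hi => hp i (mem_insert_of_mem hi)
    have hqT := fun i hi => hq i (mem_insert_of_mem hi)
    have hpqT := fun i hi => hpq i (mem_insert_of_mem hi)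
    have hsucc : Monotone fun c => f (c + 1) := fun a b h => hf (Nat.add_le_add_right h 1)
    have hstep : bernExp q T f ≤ bernExp q T (fun c => f (c + 1)) :=
      bernExp_mono hqT fun c => hf c.le_succ
    have hpa := hp a (mem_insert_self a T)
    have hqa := hpq a (mem_insert_self a T)
    rw [bernExp_insert ha, bernExp_insert ha]
    calc p a * bernExp p T (fun c => f (c + 1)) + (1 - p a) * bernExp p T f
        ≤ p a * bernExp q T (fun c => f (c + 1)) + (1 - p a) * bernExp q T f :=
          add_le_add (mul_le_mul_of_nonneg_left (ih hsucc hpT hqT hpqT) hpa.1)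
            (mul_le_mul_of_nonneg_left (ih hf hpT hqT hpqT) (sub_nonneg.2 hpa.2))
      _ ≤ q a * bernExp q T (fun c => f (c + 1)) + (1 - q a) * bernExp q T f := by
          linarith [mul_le_mul_of_nonneg_left hstep (sub_nonneg.2 hqa)]

lemma bernExp_le_bernExp_of_le_of_antitone (hf : Antitone f)
    (hp : ∀ i ∈ T, p i ∈ Set.Icc (0 : ℝ) 1) (hq : ∀ i ∈ T, q i ∈ Set.Icc (0 : ℝ) 1)
    (hpq : ∀ i ∈ T, p i ≤ q i) : bernExp q T f ≤ bernExp p T f := by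
  have := bernExp_le_bernExp_of_le hf.neg hp hq hpq
  rwa [bernExp_neg, bernExp_neg, neg_le_neg_iff] at this

lemma bernExp_le_bernExp_of_subset (hf : Monotone f) {T' : Finset ℕ} (hTT' : T ⊆ T')
    (hp : ∀ i ∈ T', p i ∈ Set.Icc (0 : ℝ) 1) : bernExp p T f ≤ bernExp p T' f := by
  suffices ∀ U ⊆ T' \ T, bernExp p T f ≤ bernExp p (T ∪ U) f by
    simpa [union_sdiff_of_subset hTT'] using this _ subset_rfl
  intro U
  induction U using Finset.induction_on with
  | empty => simp
  | insert a U ha ih =>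
    intro hU
    have haT : a ∉ T ∪ U := by
      have := mem_sdiff.mp (hU (mem_insert_self a U))
      simp [this.2, ha]
    have hTU : T ∪ U ⊆ T' := union_subset hTT' fun i hi =>
      (mem_sdiff.mp (hU (mem_insert_of_mem hi))).1
    have haT' : a ∈ T' := (mem_sdiff.mp (hU (mem_insert_self a U))).1
    have hpa := hp a haT'
    calc bernExp p T f ≤ bernExp p (T ∪ U) f := ih ((subset_insert a U).trans hU)
      _ ≤ p a * bernExp p (T ∪ U) (fun c => f (c + 1)) + (1 - p a) * bernExp p (T ∪ U) f := by
          nlinarith [mul_le_mul_of_nonneg_left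
            (bernExp_mono (fun i hi => hp i (hTU hi)) fun c => hf c.le_succ) hpa.1]
      _ = bernExp p (T ∪ insert a U) f := by rw [union_insert, bernExp_insert haT]

lemma bernExp_le_bernExp_of_subset_of_antitone (hf : Antitone f) {T' : Finset ℕ}
    (hTT' : T ⊆ T') (hp : ∀ i ∈ T', p i ∈ Set.Icc (0 : ℝ) 1) :
    bernExp p T' f ≤ bernExp p T f := by
  have := bernExp_le_bernExp_of_subset hf.neg hTT' hp
  rwa [bernExp_neg, bernExp_neg, neg_le_neg_iff] at this

end BernExp

noncomputable def capMin (k c : ℕ) : ℝ := min (c : ℝ) k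

noncomputable def hasRoom (k c : ℕ) : ℝ := if c < k then 1 else 0

/-- Indicator that exactly `l` of `k` items remain after `c` acceptances. -/
noncomputable def roomEq (k l c : ℕ) : ℝ := if c + l = k then 1 else 0

section Counting

variable {k : ℕ}

lemma capMin_succ (k c : ℕ) : capMin k (c + 1) = capMin k c + hasRoom k c := by
  unfold capMin hasRoom
  split_ifs with h
  · rw [min_eq_left (by exact_mod_cast h), min_eq_left (by exact_mod_cast h.le)]
    push_cast; ring
  · rw [min_eq_right (by push_cast; linarith [(Nat.cast_le (α := ℝ)).2 (not_lt.1 h)]),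
      min_eq_right (by exact_mod_cast not_lt.1 h), add_zero]

lemma monotone_capMin (k : ℕ) : Monotone (capMin k) :=
  fun _ _ h => min_le_min_right _ (Nat.cast_le.2 h)

lemma capMin_le (k c : ℕ) : capMin k c ≤ k := min_le_right _ _

lemma capMin_le_self (k c : ℕ) : capMin k c ≤ c := min_le_left _ _

lemma antitone_hasRoom (k : ℕ) : Antitone (hasRoom k) := by
  intro a b h
  unfold hasRoom
  split_ifs <;> norm_num
  omega

lemma hasRoom_mem_Icc (k c : ℕ) : hasRoom k c ∈ Set.Icc (0 : ℝ) 1 := by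
  unfold hasRoom; split_ifs <;> simp

lemma roomEq_succ (k l c : ℕ) : roomEq k l (c + 1) = roomEq k (l + 1) c := by
  simp only [roomEq, add_assoc, add_comm 1 l]

lemma roomEq_succ_self (k c : ℕ) : roomEq k (k + 1) c = 0 := if_neg (by omega)

lemma sum_roomEq (k c : ℕ) : ∑ l ∈ Icc 1 k, roomEq k l c = hasRoom k c := by
  unfold roomEq hasRoom
  split_ifs with hc
  · rw [sum_eq_single_of_mem (k - c) (mem_Icc.2 (by omega)) fun l hl hne => if_neg (by omega),
      if_pos (by omega)]
  · exact sum_eq_zero fun l hl => if_neg (by simp only [mem_Icc] at hl; omega)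

lemma bernExp_capMin_insert {a : ℕ} {T : Finset ℕ} (ha : a ∉ T) (p : ℕ → ℝ) :
    bernExp p (insert a T) (capMin k) =
      bernExp p T (capMin k) + p a * bernExp p T (hasRoom k) := by
  rw [bernExp_insert ha, bernExp_congr (capMin_succ k), bernExp_add]
  ring

lemma bernExp_capMin_Icc (p : ℕ → ℝ) (k n : ℕ) :
    bernExp p (Icc 1 n) (capMin k) = ∑ i ∈ Icc 1 n, p i * bernExp p (Ico 1 i) (hasRoom k) := by
  induction n with
  | zero => simp [capMin]
  | succ n ih =>
    have hn : n + 1 ∉ Icc 1 n := by simp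
    rw [← insert_Icc_right_eq_Icc_add_one (by omega), bernExp_capMin_insert hn, sum_insert hn,
      ih, Ico_add_one_right_eq_Icc]
    ring

end Counting

lemma eMinBer_eq_bernExp (p : ℕ → ℝ) (t k : ℕ) :
    eMinBer p t k = bernExp p (Icc 1 t) (capMin k) := rfl

lemma QProph_eq_bernExp (k n : ℕ) (G : ℕ → ℕ → ℝ) (j : ℕ) :
    QProph k n G j = bernExp (fun i => G i j) (Icc 1 n) (capMin k) := rfl

lemma probLt_eq_bernExp (p : ℕ → ℝ) (t k : ℕ) :
    probLt p t k = bernExp p (Icc 1 t) (hasRoom k) := by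
  rw [probLt, sum_filter]
  exact sum_congr rfl fun S _ => by unfold hasRoom; split_ifs <;> simp [bernWeight]

/-- The state probabilities `x_i^l` of the policy accepting agent `i` with probability `τ i`
while items remain: for `l ≥ 1`, exactly `l` items remain iff `k - l` earlier agents were
accepted. -/
noncomputable def stateProb (k : ℕ) (τ : ℕ → ℝ) (i l : ℕ) : ℝ :=
  bernExp τ (Ico 1 i) (roomEq k l)

noncomputable def coverValue (k n : ℕ) (G : ℕ → ℕ → ℝ) (j : ℕ) (τ : ℕ → ℝ) : ℝ :=
  ∑ i ∈ Icc 1 n, min (τ i) (G i j) * bernExp τ (Ico 1 i) (hasRoom k)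

section StateProb

variable {k n : ℕ} {τ : ℕ → ℝ}

lemma stateProb_one (k : ℕ) (τ : ℕ → ℝ) (l : ℕ) :
    stateProb k τ 1 l = if l = k then 1 else 0 := by
  simp [stateProb, roomEq]

lemma stateProb_succ (k : ℕ) (τ : ℕ → ℝ) {i : ℕ} (hi : 1 ≤ i) (l : ℕ) :
    stateProb k τ (i + 1) l = (1 - τ i) * stateProb k τ i l + τ i * stateProb k τ i (l + 1) := by
  unfold stateProb
  rw [Nat.Ico_succ_right_eq_insert_Ico hi, bernExp_insert (by simp),
    bernExp_congr (roomEq_succ k l)]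
  ring

lemma stateProb_succ_self (k : ℕ) (τ : ℕ → ℝ) (i : ℕ) : stateProb k τ i (k + 1) = 0 := by
  rw [stateProb, bernExp_congr (roomEq_succ_self k), bernExp_const]

lemma stateProb_nonneg (k : ℕ) (hτ : ∀ i ∈ Icc 1 n, τ i ∈ Set.Icc (0 : ℝ) 1) {i : ℕ}
    (hi : i ∈ Icc 1 n) (l : ℕ) : 0 ≤ stateProb k τ i l :=
  bernExp_nonneg (fun a ha => hτ a (Ico_subset_Icc_self.trans (Icc_subset_Icc_right
    (mem_Icc.1 hi).2) ha)) fun c => by unfold roomEq; positivity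

lemma sum_stateProb (k : ℕ) (τ : ℕ → ℝ) (i : ℕ) :
    ∑ l ∈ Icc 1 k, stateProb k τ i l = bernExp τ (Ico 1 i) (hasRoom k) := by
  unfold stateProb
  rw [← bernExp_sum, bernExp_congr (sum_roomEq k)]

lemma memP_stateProb (hτ : ∀ i ∈ Icc 1 n, τ i ∈ Set.Icc (0 : ℝ) 1) :
    memP k n (stateProb k τ) (fun i l => τ i * stateProb k τ i l) := by
  refine ⟨by simp [stateProb_one], fun l _ hl => by simp [stateProb_one, hl.ne], ?_, ?_⟩
  · intro i hi l hl
    obtain ⟨i, rfl⟩ : ∃ i', i = i' + 1 := ⟨i - 1, by simp only [mem_Icc] at hi; omega⟩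
    rw [Nat.add_sub_cancel, stateProb_succ k τ (by simp only [mem_Icc] at hi; omega)]
    split_ifs with hlk
    · ring
    · rw [show l = k by simp only [mem_Icc] at hl; omega, stateProb_succ_self]
      ring
  · intro i hi l _
    have hτi := hτ i hi
    have hx := stateProb_nonneg k hτ hi l
    exact ⟨mul_nonneg hτi.1 hx, mul_le_of_le_one_left hx hτi.2⟩

lemma eq_stateProb_of_memP {x y : ℕ → ℕ → ℝ} (hxy : memP k n x y)
    (hy : ∀ i ∈ Icc 1 n, ∀ l ∈ Icc 1 k, y i l = τ i * x i l) :
    ∀ i ∈ Icc 1 n, ∀ l ∈ Icc 1 k, x i l = stateProb k τ i l := by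
  obtain ⟨hx1k, hx1, hrec, -⟩ := hxy
  intro i hi
  obtain ⟨hi1, hin⟩ := mem_Icc.mp hi
  induction i, hi1 using Nat.le_induction with
  | base =>
    intro l hl
    rw [stateProb_one]
    split_ifs with hlk
    · rw [hlk, hx1k]
    · exact hx1 l (mem_Icc.mp hl).1 (lt_of_le_of_ne (mem_Icc.mp hl).2 hlk)
  | succ i hi1 ih =>
    intro l hl
    have hi : i ∈ Icc 1 n := mem_Icc.2 ⟨hi1, by omega⟩
    have ih := ih hi (by omega)
    rw [hrec (i + 1) (mem_Icc.2 ⟨by omega, hin⟩) l hl, Nat.add_sub_cancel,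
      stateProb_succ k τ hi1, hy i hi l hl, ih l hl]
    split_ifs with hlk
    · have hl' : l + 1 ∈ Icc 1 k := mem_Icc.2 ⟨by omega, hlk⟩
      rw [hy i hi (l + 1) hl', ih (l + 1) hl']
      ring
    · rw [show l = k by simp only [mem_Icc] at hl; omega, stateProb_succ_self]
      ring

lemma coverSum_eq_coverValue (G : ℕ → ℕ → ℝ) (j : ℕ)
    (hτ : ∀ i ∈ Icc 1 n, τ i ∈ Set.Icc (0 : ℝ) 1) {x y : ℕ → ℕ → ℝ}
    (hx : ∀ i ∈ Icc 1 n, ∀ l ∈ Icc 1 k, x i l = stateProb k τ i l)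
    (hy : ∀ i ∈ Icc 1 n, ∀ l ∈ Icc 1 k, y i l = τ i * x i l) :
    coverSum k n G j x y = coverValue k n G j τ := by
  refine sum_congr rfl fun i hi => ?_
  rw [← sum_stateProb, mul_sum]
  refine sum_congr rfl fun l hl => ?_
  rw [hy i hi l hl, hx i hi l hl, min_mul_of_nonneg _ _ (stateProb_nonneg k hτ hi l)]

lemma innerLP_OST_eq {m : ℕ} {G : ℕ → ℕ → ℝ} {J : ℕ} {ρ : ℝ} (Q : ℕ → ℝ)
    (hτ : ∀ i ∈ Icc 1 n, tauOf G J ρ i ∈ Set.Icc (0 : ℝ) 1) :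
    innerLP_OST k n m G J ρ Q =
      sSup {θ : ℝ | ∀ j ∈ Icc 1 m, θ * Q j ≤ coverValue k n G j (tauOf G J ρ)} := by
  unfold innerLP_OST
  congr 1
  ext θ
  constructor
  · rintro ⟨x, y, hxy, hy, hθ⟩ j hj
    rw [← coverSum_eq_coverValue G j hτ (eq_stateProb_of_memP hxy hy) hy]
    exact hθ j hj
  · intro hθ
    refine ⟨_, _, memP_stateProb hτ, fun _ _ _ _ => rfl, fun j hj => ?_⟩
    rw [coverSum_eq_coverValue G j hτ (fun _ _ _ _ => rfl) fun _ _ _ _ => rfl]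
    exact hθ j hj

end StateProb

namespace IsTypeDist

variable {n m : ℕ} {G : ℕ → ℕ → ℝ} {i : ℕ}

lemma mono (hG : IsTypeDist n m G) (hi : i ∈ Icc 1 n) {a b : ℕ} (hab : a ≤ b) (hb : b ≤ m) :
    G i a ≤ G i b := by
  induction b, hab using Nat.le_induction with
  | base => rfl
  | succ b hab ih =>
    have h := (hG i hi).2.2 (b + 1) (mem_Icc.2 ⟨by omega, hb⟩)
    rw [Nat.add_sub_cancel] at h
    exact (ih (by omega)).trans h

lemma apply_mem_Icc (hG : IsTypeDist n m G) (hi : i ∈ Icc 1 n) {a : ℕ} (ha : a ≤ m) :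
    G i a ∈ Set.Icc (0 : ℝ) 1 :=
  ⟨(hG i hi).1 ▸ hG.mono hi a.zero_le ha, (hG i hi).2.1 ▸ hG.mono hi ha le_rfl⟩

variable {J : ℕ} {ρ : ℝ}

lemma le_tauOf (hG : IsTypeDist n m G) (hi : i ∈ Icc 1 n) (hJ : J ∈ Icc 1 m)
    (hρ : ρ ∈ Set.Ioc (0 : ℝ) 1) : G i (J - 1) ≤ tauOf G J ρ i := by
  have := hG.mono hi (J.sub_le 1) (mem_Icc.1 hJ).2
  unfold tauOf
  nlinarith [hρ.1]

lemma tauOf_le (hG : IsTypeDist n m G) (hi : i ∈ Icc 1 n) (hJ : J ∈ Icc 1 m)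
    (hρ : ρ ∈ Set.Ioc (0 : ℝ) 1) : tauOf G J ρ i ≤ G i J := by
  have := hG.mono hi (J.sub_le 1) (mem_Icc.1 hJ).2
  unfold tauOf
  nlinarith [hρ.2]

lemma tauOf_mem_Icc (hG : IsTypeDist n m G) (hJ : J ∈ Icc 1 m) (hρ : ρ ∈ Set.Ioc (0 : ℝ) 1) :
    ∀ i ∈ Icc 1 n, tauOf G J ρ i ∈ Set.Icc (0 : ℝ) 1 := fun i hi =>
  ⟨(hG.apply_mem_Icc hi (by simp only [mem_Icc] at hJ; omega)).1.trans (hG.le_tauOf hi hJ hρ),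
    (hG.tauOf_le hi hJ hρ).trans (hG.apply_mem_Icc hi (mem_Icc.1 hJ).2).2⟩

end IsTypeDist

section CoverValue

variable {k n : ℕ} {G : ℕ → ℕ → ℝ} {j : ℕ} {τ : ℕ → ℝ}

lemma coverValue_eq_of_le_left (h : ∀ i ∈ Icc 1 n, τ i ≤ G i j) :
    coverValue k n G j τ = bernExp τ (Icc 1 n) (capMin k) := by
  rw [bernExp_capMin_Icc]
  exact sum_congr rfl fun i hi => by rw [min_eq_left (h i hi)]

lemma coverValue_eq_of_le_right (h : ∀ i ∈ Icc 1 n, G i j ≤ τ i) :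
    coverValue k n G j τ = ∑ i ∈ Icc 1 n, G i j * bernExp τ (Ico 1 i) (hasRoom k) :=
  sum_congr rfl fun i hi => by rw [min_eq_right (h i hi)]

end CoverValue

noncomputable def bestOST (k n m : ℕ) (G : ℕ → ℕ → ℝ) (Q : ℕ → ℝ) : ℝ :=
  sSup {w : ℝ | ∃ J ∈ Icc 1 m, ∃ ρ ∈ Set.Ioc (0 : ℝ) 1, w = innerLP_OST k n m G J ρ Q}

section InnerLP

variable {k n m : ℕ} {G : ℕ → ℕ → ℝ} {J : ℕ} {ρ : ℝ} {Q : ℕ → ℝ}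

lemma le_one_of_forall_le_coverValue (hk : 1 ≤ k) (hm : 1 ≤ m) (hG : IsTypeDist n m G)
    (hJ : J ∈ Icc 1 m) (hρ : ρ ∈ Set.Ioc (0 : ℝ) 1) (hQ : Q m = k) {θ : ℝ}
    (hθ : ∀ j ∈ Icc 1 m, θ * Q j ≤ coverValue k n G j (tauOf G J ρ)) : θ ≤ 1 := by
  have hτ := hG.tauOf_mem_Icc hJ hρ
  have h := hθ m (mem_Icc.2 ⟨hm, le_rfl⟩)
  rw [hQ, coverValue_eq_of_le_left fun i hi => (hG i hi).2.1 ▸ (hτ i hi).2] at h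
  have hk' : (0 : ℝ) < k := by exact_mod_cast hk
  exact le_of_mul_le_mul_right (by simpa using h.trans (bernExp_le_const hτ (capMin_le k)))
    hk'

lemma le_innerLP_OST (hk : 1 ≤ k) (hm : 1 ≤ m) (hG : IsTypeDist n m G)
    (hJ : J ∈ Icc 1 m) (hρ : ρ ∈ Set.Ioc (0 : ℝ) 1) (hQ : Q m = k) {θ : ℝ}
    (hθ : ∀ j ∈ Icc 1 m, θ * Q j ≤ coverValue k n G j (tauOf G J ρ)) :
    θ ≤ innerLP_OST k n m G J ρ Q := by
  rw [innerLP_OST_eq Q (hG.tauOf_mem_Icc hJ hρ)]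
  exact le_csSup ⟨1, fun _ => le_one_of_forall_le_coverValue hk hm hG hJ hρ hQ⟩ hθ

lemma innerLP_OST_le (hG : IsTypeDist n m G) (hJ : J ∈ Icc 1 m) (hρ : ρ ∈ Set.Ioc (0 : ℝ) 1)
    {b : ℝ} (hb : 0 ≤ b)
    (h : ∀ θ, (∀ j ∈ Icc 1 m, θ * Q j ≤ coverValue k n G j (tauOf G J ρ)) → θ ≤ b) :
    innerLP_OST k n m G J ρ Q ≤ b := by
  rw [innerLP_OST_eq Q (hG.tauOf_mem_Icc hJ hρ)]
  exact Real.sSup_le h hb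

lemma innerLP_OST_le_bestOST (hk : 1 ≤ k) (hm : 1 ≤ m) (hG : IsTypeDist n m G)
    (hJ : J ∈ Icc 1 m) (hρ : ρ ∈ Set.Ioc (0 : ℝ) 1) (hQ : Q m = k) :
    innerLP_OST k n m G J ρ Q ≤ bestOST k n m G Q := by
  refine le_csSup ⟨1, ?_⟩ ⟨J, hJ, ρ, hρ, rfl⟩
  rintro _ ⟨J, hJ, ρ, hρ, rfl⟩
  exact innerLP_OST_le hG hJ hρ zero_le_one fun _ =>
    le_one_of_forall_le_coverValue hk hm hG hJ hρ hQ

lemma bestOST_le {b : ℝ} (hb : 0 ≤ b)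
    (h : ∀ J ∈ Icc 1 m, ∀ ρ ∈ Set.Ioc (0 : ℝ) 1, innerLP_OST k n m G J ρ Q ≤ b) :
    bestOST k n m G Q ≤ b :=
  Real.sSup_le (by rintro _ ⟨J, hJ, ρ, hρ, rfl⟩; exact h J hJ ρ hρ) hb

end InnerLP

/-- The properties of the benchmarks `Q^Proph` and `Q^ExAnte` that the argument uses. -/
structure IsBenchmark (k n : ℕ) (Q : (ℕ → ℕ → ℝ) → ℕ → ℝ) : Prop where
  le_cap : ∀ {m G}, IsTypeDist n m G → ∀ j ≤ m, Q G j ≤ k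
  le_sum : ∀ {m G}, IsTypeDist n m G → ∀ j ≤ m, Q G j ≤ ∑ i ∈ Icc 1 n, G i j
  eq_cap : ∀ {m G}, IsTypeDist n m G → Q G m = k
  le_of_mem : ∀ {m G}, IsTypeDist n m G → ∀ j ≤ m, ∀ a ∈ Icc 1 n, G a j ≤ Q G j

section Benchmarks

variable {k n : ℕ}

lemma isBenchmark_QProph (hk : 1 ≤ k) (hkn : k ≤ n) : IsBenchmark k n (QProph k n) where
  le_cap hG j hj := by
    rw [QProph_eq_bernExp]
    exact bernExp_le_const (fun _ hi => hG.apply_mem_Icc hi hj) (capMin_le k)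
  le_sum hG j hj := by
    rw [QProph_eq_bernExp, ← bernExp_natCast]
    exact bernExp_mono (fun _ hi => hG.apply_mem_Icc hi hj) (capMin_le_self k)
  eq_cap hG := by
    rw [QProph_eq_bernExp, bernExp_of_forall_eq_one fun i hi => (hG i hi).2.1, Nat.card_Icc,
      Nat.add_sub_cancel, capMin, min_eq_right (by exact_mod_cast hkn)]
  le_of_mem hG j hj a ha := by
    have h := bernExp_le_bernExp_of_subset (monotone_capMin k) (singleton_subset_iff.2 ha)
      (fun _ hi => hG.apply_mem_Icc hi hj)
    rw [bernExp_singleton, ← QProph_eq_bernExp] at h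
    simpa [capMin, Nat.one_le_cast.2 hk] using h

lemma isBenchmark_QExAnte (hk : 1 ≤ k) (hkn : k ≤ n) : IsBenchmark k n (QExAnte k n) where
  le_cap _ _ _ := min_le_right _ _
  le_sum _ _ _ := min_le_left _ _
  eq_cap hG := by
    rw [QExAnte, sum_congr rfl fun i hi => (hG i hi).2.1, sum_const, Nat.card_Icc,
      Nat.add_sub_cancel, nsmul_one, min_eq_right (by exact_mod_cast hkn)]
  le_of_mem hG j hj a ha :=
    le_min (single_le_sum (fun i hi => (hG.apply_mem_Icc hi hj).1) ha)
      ((hG.apply_mem_Icc ha hj).2.trans (Nat.one_le_cast.2 hk))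

end Benchmarks

noncomputable def crossGap (k : ℕ) (T : Finset ℕ) (p : ℕ → ℝ) : ℝ :=
  bernExp p T (capMin k) - k * bernExp p T (hasRoom k)

def bernOptSet (k t : ℕ) : Set ℝ :=
  {α | ∃ q : ℕ → ℝ, (∀ i ∈ Icc 1 t, q i ∈ Set.Icc (0 : ℝ) 1) ∧
    α = probLt q t k ∧ α = eMinBer q t k / k}

lemma Icc_one_sub_one (n : ℕ) : Icc 1 (n - 1) = Ico 1 n := by
  ext i; simp only [mem_Icc, mem_Ico]; omega

lemma mem_bernOptSet_iff {k : ℕ} (hk : k ≠ 0) (n : ℕ) {α : ℝ} :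
    α ∈ bernOptSet k (n - 1) ↔ ∃ q : ℕ → ℝ, (∀ i ∈ Ico 1 n, q i ∈ Set.Icc (0 : ℝ) 1) ∧
      α = bernExp q (Ico 1 n) (hasRoom k) ∧ crossGap k (Ico 1 n) q = 0 := by
  have hk' : (k : ℝ) ≠ 0 := Nat.cast_ne_zero.2 hk
  simp only [bernOptSet, probLt_eq_bernExp, eMinBer_eq_bernExp, Icc_one_sub_one, crossGap,
    sub_eq_zero, eq_div_iff hk']
  refine exists_congr fun q => and_congr_right fun _ => and_congr_right fun hα => ?_
  rw [← hα, mul_comm, eq_comm]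

lemma exists_sign_change {D : ℕ → ℝ} (h0 : D 0 < 0) :
    ∀ {m : ℕ}, 0 ≤ D m → ∃ J ∈ Icc 1 m, D (J - 1) < 0 ∧ 0 ≤ D J
  | 0, hm => absurd hm (not_le.2 h0)
  | m + 1, hm => by
    by_cases h : 0 ≤ D m
    · obtain ⟨J, hJ, hJ'⟩ := exists_sign_change h0 h
      exact ⟨J, mem_Icc.2 ⟨(mem_Icc.1 hJ).1, (mem_Icc.1 hJ).2.trans m.le_succ⟩, hJ'⟩
    · exact ⟨m + 1, mem_Icc.2 ⟨m.succ_pos, le_rfl⟩, not_le.1 h, hm⟩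

lemma exists_mem_Ioc_eq_zero {f : ℝ → ℝ} (hf : Continuous f) (h0 : f 0 < 0) (h1 : 0 ≤ f 1) :
    ∃ ρ ∈ Set.Ioc (0 : ℝ) 1, f ρ = 0 := by
  obtain ⟨ρ, hρ, hfρ⟩ := intermediate_value_Icc zero_le_one hf.continuousOn ⟨h0.le, h1⟩
  refine ⟨ρ, ⟨lt_of_le_of_ne hρ.1 ?_, hρ.2⟩, hfρ⟩
  rintro rfl
  exact h0.ne hfρ

lemma exists_crossGap_eq_zero {k n m : ℕ} {G : ℕ → ℕ → ℝ} (hk : 1 ≤ k) (hkn : k < n)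
    (hG : IsTypeDist n m G) :
    ∃ J ∈ Icc 1 m, ∃ ρ ∈ Set.Ioc (0 : ℝ) 1, crossGap k (Ico 1 n) (tauOf G J ρ) = 0 := by
  have hIco : Ico 1 n ⊆ Icc 1 n := Ico_subset_Icc_self
  set D : ℕ → ℝ := fun j => crossGap k (Ico 1 n) fun i => G i j
  have hD0 : D 0 < 0 := by
    simp only [D, crossGap, bernExp_of_forall_eq_zero fun i hi => (hG i (hIco hi)).1, capMin,
      hasRoom, if_pos (by omega : 0 < k)]
    norm_num
    omega
  have hDm : 0 ≤ D m := by
    simp only [D, crossGap, bernExp_of_forall_eq_one fun i hi => (hG i (hIco hi)).2.1,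
      Nat.card_Ico, capMin, hasRoom, if_neg (by omega : ¬n - 1 < k)]
    rw [min_eq_right (by exact_mod_cast (by omega : k ≤ n - 1))]
    simp
  obtain ⟨J, hJ, hJ1, hJ2⟩ := exists_sign_change hD0 hDm
  have hτ : ∀ i, Continuous fun ρ => tauOf G J ρ i := fun i => by unfold tauOf; fun_prop
  have hf : Continuous fun ρ => crossGap k (Ico 1 n) (tauOf G J ρ) :=
    (continuous_bernExp hτ _ _).sub (continuous_const.mul (continuous_bernExp hτ _ _))
  have hτ0 : tauOf G J 0 = fun i => G i (J - 1) := by funext i; simp [tauOf]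
  have hτ1 : tauOf G J 1 = fun i => G i J := by funext i; simp [tauOf]
  obtain ⟨ρ, hρ, hfρ⟩ := exists_mem_Ioc_eq_zero hf (by rwa [hτ0]) (by rwa [hτ1])
  exact ⟨J, hJ, ρ, hρ, hfρ⟩

section LowerBound

variable {k n m : ℕ} {G : ℕ → ℕ → ℝ} {J : ℕ} {ρ : ℝ}

/-- At a crossing point `θ = P(A_{n-1} < k)` is feasible: for `j ≥ J` the covering value is
`𝔼[min(A_n, k)] ≥ 𝔼[min(A_{n-1}, k)] = kθ`, and for `j < J` it is
`∑ᵢ G_ij P(A_{i-1} < k) ≥ θ ∑ᵢ G_ij`. -/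
lemma mul_le_coverValue_of_crossGap_eq_zero (hG : IsTypeDist n m G) (hJ : J ∈ Icc 1 m)
    (hρ : ρ ∈ Set.Ioc (0 : ℝ) 1) (hcross : crossGap k (Ico 1 n) (tauOf G J ρ) = 0)
    {j : ℕ} (hj : j ≤ m) {Qj : ℝ} (hcap : Qj ≤ k) (hsum : Qj ≤ ∑ i ∈ Icc 1 n, G i j) :
    bernExp (tauOf G J ρ) (Ico 1 n) (hasRoom k) * Qj ≤ coverValue k n G j (tauOf G J ρ) := by
  set τ := tauOf G J ρ
  have hτ := hG.tauOf_mem_Icc hJ hρ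
  have hτ' : ∀ i ∈ Ico 1 n, τ i ∈ Set.Icc (0 : ℝ) 1 := fun i hi => hτ i (Ico_subset_Icc_self hi)
  have hθ : 0 ≤ bernExp τ (Ico 1 n) (hasRoom k) :=
    bernExp_nonneg hτ' fun c => (hasRoom_mem_Icc k c).1
  obtain ⟨hJ1, hJm⟩ := mem_Icc.1 hJ
  by_cases hJj : J ≤ j
  · rw [coverValue_eq_of_le_left fun i hi => (hG.tauOf_le hi hJ hρ).trans (hG.mono hi hJj hj)]
    calc bernExp τ (Ico 1 n) (hasRoom k) * Qj
        ≤ bernExp τ (Ico 1 n) (hasRoom k) * k := mul_le_mul_of_nonneg_left hcap hθ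
      _ = bernExp τ (Ico 1 n) (capMin k) := by
          rw [crossGap, sub_eq_zero] at hcross; rw [hcross, mul_comm]
      _ ≤ bernExp τ (Icc 1 n) (capMin k) :=
          bernExp_le_bernExp_of_subset (monotone_capMin k) Ico_subset_Icc_self hτ
  · rw [coverValue_eq_of_le_right fun i hi =>
      (hG.mono hi (by omega) (by omega)).trans (hG.le_tauOf hi hJ hρ)]
    calc bernExp τ (Ico 1 n) (hasRoom k) * Qj
        ≤ bernExp τ (Ico 1 n) (hasRoom k) * ∑ i ∈ Icc 1 n, G i j :=
          mul_le_mul_of_nonneg_left hsum hθ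
      _ = ∑ i ∈ Icc 1 n, G i j * bernExp τ (Ico 1 n) (hasRoom k) := by
          rw [mul_sum]; simp only [mul_comm]
      _ ≤ ∑ i ∈ Icc 1 n, G i j * bernExp τ (Ico 1 i) (hasRoom k) := by
          refine sum_le_sum fun i hi => mul_le_mul_of_nonneg_left ?_ (hG.apply_mem_Icc hi hj).1
          exact bernExp_le_bernExp_of_subset_of_antitone (antitone_hasRoom k)
            (Ico_subset_Ico_right (mem_Icc.1 hi).2) hτ'

lemma exists_mem_bernOptSet_le_bestOST {Q : (ℕ → ℕ → ℝ) → ℕ → ℝ} (hk : 1 ≤ k) (hkn : k < n)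
    (hQ : IsBenchmark k n Q) (hm : 1 ≤ m) (hG : IsTypeDist n m G) :
    ∃ α ∈ bernOptSet k (n - 1), α ≤ bestOST k n m G (Q G) := by
  obtain ⟨J, hJ, ρ, hρ, hcross⟩ := exists_crossGap_eq_zero hk hkn hG
  have hτ := hG.tauOf_mem_Icc hJ hρ
  refine ⟨_, (mem_bernOptSet_iff (by omega) n).2
    ⟨_, fun i hi => hτ i (Ico_subset_Icc_self hi), rfl, hcross⟩, ?_⟩
  refine (le_innerLP_OST hk hm hG hJ hρ (hQ.eq_cap hG) fun j hj => ?_).trans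
    (innerLP_OST_le_bestOST hk hm hG hJ hρ (hQ.eq_cap hG))
  have hjm := (mem_Icc.1 hj).2
  exact mul_le_coverValue_of_crossGap_eq_zero hG hJ hρ hcross hjm (hQ.le_cap hG j hjm)
    (hQ.le_sum hG j hjm)

end LowerBound

/-- Agent `n` has type `1` with probability `δ`, agent `i < n` has type `2` with probability
`q i`, and the remaining mass is on type `3`. -/
noncomputable def hardInstance (n : ℕ) (q : ℕ → ℝ) (δ : ℝ) (i j : ℕ) : ℝ :=
  if j = 0 then 0 else if 3 ≤ j then 1 else if i = n then δ else if j = 1 then 0 else q i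

section HardInstance

variable {k n : ℕ} {q : ℕ → ℝ} {δ : ℝ}

lemma isTypeDist_hardInstance (hq : ∀ i ∈ Ico 1 n, q i ∈ Set.Icc (0 : ℝ) 1)
    (hδ : δ ∈ Set.Icc (0 : ℝ) 1) : IsTypeDist n 3 (hardInstance n q δ) := by
  intro i hi
  refine ⟨by simp [hardInstance], by simp [hardInstance], fun j hj => ?_⟩
  have hqi : i ≠ n → q i ∈ Set.Icc (0 : ℝ) 1 := fun hin =>
    hq i (by simp only [mem_Icc, mem_Ico] at hi ⊢; omega)
  obtain rfl | rfl | rfl : j = 1 ∨ j = 2 ∨ j = 3 := by simp only [mem_Icc] at hj; omega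
  all_goals by_cases hin : i = n
  all_goals simp [hardInstance, hin, hδ.1, hδ.2] <;> linarith [(hqi hin).1, (hqi hin).2]

lemma hardInstance_two {i : ℕ} (hi : i ≠ n) : hardInstance n q δ i 2 = q i := by
  simp [hardInstance, hi]

variable {ρ θ : ℝ}

lemma le_add_of_le_coverValue_three (hk : 1 ≤ k) (hn : 1 ≤ n)
    (hq : ∀ i ∈ Ico 1 n, q i ∈ Set.Icc (0 : ℝ) 1) (hδ : δ ∈ Set.Ioc (0 : ℝ) 1)
    (hcross : crossGap k (Ico 1 n) q = 0) {J : ℕ} (hJ : J ∈ Icc 1 3) (hJ2 : J ≤ 2)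
    (hρ : ρ ∈ Set.Ioc (0 : ℝ) 1)
    (hθ : θ * k ≤ coverValue k n (hardInstance n q δ) 3 (tauOf (hardInstance n q δ) J ρ)) :
    θ ≤ bernExp q (Ico 1 n) (hasRoom k) + δ := by
  set τ := tauOf (hardInstance n q δ) J ρ
  have hG := isTypeDist_hardInstance hq (Set.Ioc_subset_Icc_self hδ)
  have hτ := hG.tauOf_mem_Icc hJ hρ
  have hτ' : ∀ i ∈ Ico 1 n, τ i ∈ Set.Icc (0 : ℝ) 1 := fun i hi => hτ i (Ico_subset_Icc_self hi)
  have hτ2 : ∀ i ∈ Icc 1 n, τ i ≤ hardInstance n q δ i 2 := fun i hi =>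
    (hG.tauOf_le hi hJ hρ).trans (hG.mono hi hJ2 (by norm_num))
  have hτn : τ n ≤ δ := by simpa [hardInstance] using hτ2 n (mem_Icc.2 ⟨hn, le_rfl⟩)
  have hτq : ∀ i ∈ Ico 1 n, τ i ≤ q i := fun i hi => by
    simpa [hardInstance_two (mem_Ico.1 hi).2.ne] using hτ2 i (Ico_subset_Icc_self hi)
  have hroom := bernExp_le_const hτ' (fun c => (hasRoom_mem_Icc k c).2)
  have hroom0 := bernExp_nonneg hτ' (fun c => (hasRoom_mem_Icc k c).1)
  have hcap := bernExp_le_bernExp_of_le (monotone_capMin k) hτ' hq hτq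
  have hτ3 : ∀ i ∈ Icc 1 n, τ i ≤ hardInstance n q δ i 3 := fun i hi => by
    rw [(hG i hi).2.1]; exact (hτ i hi).2
  rw [coverValue_eq_of_le_left hτ3, ← Ico_insert_right hn,
    bernExp_capMin_insert right_notMem_Ico] at hθ
  rw [crossGap, sub_eq_zero] at hcross
  have hθk : θ * k ≤ k * bernExp q (Ico 1 n) (hasRoom k) + δ := by
    nlinarith [mul_le_mul hτn hroom hroom0 hδ.1.le]
  have hk' : (1 : ℝ) ≤ k := Nat.one_le_cast.2 hk
  nlinarith [mul_le_mul_of_nonneg_left hk' hδ.1.le]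

lemma le_add_of_le_coverValue_one (hn : 1 ≤ n)
    (hq : ∀ i ∈ Ico 1 n, q i ∈ Set.Icc (0 : ℝ) 1) (hδ : δ ∈ Set.Ioc (0 : ℝ) 1)
    (hρ : ρ ∈ Set.Ioc (0 : ℝ) 1) {Q₁ : ℝ} (hQ₁ : δ ≤ Q₁)
    (hθ : θ * Q₁ ≤ coverValue k n (hardInstance n q δ) 1 (tauOf (hardInstance n q δ) 3 ρ)) :
    θ ≤ bernExp q (Ico 1 n) (hasRoom k) + δ := by
  set τ := tauOf (hardInstance n q δ) 3 ρ
  have hG := isTypeDist_hardInstance hq (Set.Ioc_subset_Icc_self hδ)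
  have hJ : 3 ∈ Icc 1 3 := by simp
  have hτ := hG.tauOf_mem_Icc hJ hρ
  have hτ' : ∀ i ∈ Ico 1 n, τ i ∈ Set.Icc (0 : ℝ) 1 := fun i hi => hτ i (Ico_subset_Icc_self hi)
  have hqτ : ∀ i ∈ Ico 1 n, q i ≤ τ i := fun i hi => by
    simpa [hardInstance_two (mem_Ico.1 hi).2.ne] using
      hG.le_tauOf (Ico_subset_Icc_self hi) hJ hρ
  have hroom := bernExp_le_bernExp_of_le_of_antitone (antitone_hasRoom k) hq hτ' hqτ
  have hα := bernExp_nonneg hq (fun c => (hasRoom_mem_Icc k c).1)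
  have hcover : coverValue k n (hardInstance n q δ) 1 τ = δ * bernExp τ (Ico 1 n) (hasRoom k) := by
    rw [coverValue_eq_of_le_right fun i hi => (hG.mono hi one_le_two (by norm_num)).trans
        (hG.le_tauOf hi hJ hρ), sum_eq_single_of_mem n (mem_Icc.2 ⟨hn, le_rfl⟩)]
    · rw [show hardInstance n q δ n 1 = δ by simp [hardInstance]]
    · intro i _ hin
      simp [hardInstance, hin]
  rw [hcover] at hθ
  rcases le_or_gt θ 0 with hθ0 | hθ0
  · linarith [hδ.1]
  · have h : δ * θ ≤ δ * bernExp q (Ico 1 n) (hasRoom k) := by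
      linarith [mul_le_mul_of_nonneg_left hQ₁ hθ0.le, mul_le_mul_of_nonneg_left hroom hδ.1.le]
    linarith [le_of_mul_le_mul_left h hδ.1, hδ.1]

lemma bestOST_hardInstance_le {Q : (ℕ → ℕ → ℝ) → ℕ → ℝ} (hk : 1 ≤ k) (hkn : k < n)
    (hQ : IsBenchmark k n Q) (hq : ∀ i ∈ Ico 1 n, q i ∈ Set.Icc (0 : ℝ) 1)
    (hδ : δ ∈ Set.Ioc (0 : ℝ) 1) (hcross : crossGap k (Ico 1 n) q = 0) :
    bestOST k n 3 (hardInstance n q δ) (Q (hardInstance n q δ)) ≤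
      bernExp q (Ico 1 n) (hasRoom k) + δ := by
  have hG := isTypeDist_hardInstance hq (Set.Ioc_subset_Icc_self hδ)
  have hb : 0 ≤ bernExp q (Ico 1 n) (hasRoom k) + δ :=
    add_nonneg (bernExp_nonneg hq fun c => (hasRoom_mem_Icc k c).1) hδ.1.le
  refine bestOST_le hb fun J hJ ρ hρ => innerLP_OST_le hG hJ hρ hb fun θ hθ => ?_
  by_cases hJ2 : J ≤ 2
  · refine le_add_of_le_coverValue_three hk (by omega) hq hδ hcross hJ hJ2 hρ ?_
    simpa [hQ.eq_cap hG] using hθ 3 (by simp)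
  · obtain rfl : J = 3 := by simp only [mem_Icc] at hJ; omega
    have hQ₁ := hQ.le_of_mem hG 1 (by norm_num) n (mem_Icc.2 ⟨by omega, le_rfl⟩)
    exact le_add_of_le_coverValue_one (by omega) hq hδ hρ (by simpa [hardInstance] using hQ₁)
      (hθ 1 (by simp))

end HardInstance

theorem sInf_bestOST_eq {k n : ℕ} {Q : (ℕ → ℕ → ℝ) → ℕ → ℝ} (hk : 1 ≤ k) (hkn : k < n)
    (hQ : IsBenchmark k n Q) :
    sInf {v : ℝ | ∃ m, 1 ≤ m ∧ ∃ G, IsTypeDist n m G ∧ v = bestOST k n m G (Q G)} =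
      sInf (bernOptSet k (n - 1)) := by
  set L := {v : ℝ | ∃ m, 1 ≤ m ∧ ∃ G, IsTypeDist n m G ∧ v = bestOST k n m G (Q G)}
  set R := bernOptSet k (n - 1)
  have hR0 : ∀ α ∈ R, 0 ≤ α := fun α hα => by
    obtain ⟨q, hq, rfl, -⟩ := (mem_bernOptSet_iff (by omega) n).1 hα
    exact bernExp_nonneg hq fun c => (hasRoom_mem_Icc k c).1
  have hLR : ∀ v ∈ L, ∃ α ∈ R, α ≤ v := by
    rintro _ ⟨m, hm, G, hG, rfl⟩
    exact exists_mem_bernOptSet_le_bestOST hk hkn hQ hm hG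
  have hL : L.Nonempty := ⟨_, 3, by norm_num, _,
    isTypeDist_hardInstance (q := 0) (fun _ _ => by simp) ⟨zero_le_one, le_rfl⟩, rfl⟩
  obtain ⟨α₀, hα₀, -⟩ := hLR _ hL.some_mem
  have hbdd : BddBelow L := ⟨0, fun v hv => by
    obtain ⟨α, hα, hαv⟩ := hLR v hv
    exact (hR0 α hα).trans hαv⟩
  apply le_antisymm
  · refine le_of_forall_pos_le_add fun ε hε => ?_
    have hδ : min ε 1 ∈ Set.Ioc (0 : ℝ) 1 := ⟨lt_min hε one_pos, min_le_right _ _⟩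
    suffices sInf L - min ε 1 ≤ sInf R by linarith [min_le_left ε 1]
    refine le_csInf ⟨α₀, hα₀⟩ fun α hα => ?_
    obtain ⟨q, hq, rfl, hcross⟩ := (mem_bernOptSet_iff (by omega) n).1 hα
    have hmem : bestOST k n 3 (hardInstance n q (min ε 1)) (Q (hardInstance n q (min ε 1))) ∈ L :=
      ⟨3, by norm_num, _, isTypeDist_hardInstance hq (Set.Ioc_subset_Icc_self hδ), rfl⟩
    linarith [csInf_le hbdd hmem, bestOST_hardInstance_le hk hkn hQ hq hδ hcross]
  · refine le_csInf hL fun v hv => ?_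
    obtain ⟨α, hα, hαv⟩ := hLR v hv
    exact (csInf_le ⟨0, hR0⟩ hα).trans hαv

/-- Corollary `bernOpt`: the worst-case OST guarantees relative to the prophet
and to the ex-ante relaxation both equal the value of the Bernoulli optimization problem
`inf{α : ∃ q ∈ [0,1]^{n-1}, α = P(Σ Ber(q_i) < k) = E[min{Σ Ber(q_i), k}]/k}`. -/
theorem stmt10 (k n : ℕ) (hk : 1 ≤ k) (hkn : k < n) :
    (sInf {v : ℝ | ∃ m, 1 ≤ m ∧ ∃ G, IsTypeDist n m G ∧
        v = sSup {w : ℝ | ∃ J ∈ Finset.Icc 1 m, ∃ ρ ∈ Set.Ioc (0:ℝ) 1,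
          w = innerLP_OST k n m G J ρ (QProph k n G)}}
      = sInf {α : ℝ | ∃ q : ℕ → ℝ, (∀ i ∈ Finset.Icc 1 (n-1), q i ∈ Set.Icc (0:ℝ) 1) ∧
          α = probLt q (n-1) k ∧ α = eMinBer q (n-1) k / k}) ∧
    (sInf {v : ℝ | ∃ m, 1 ≤ m ∧ ∃ G, IsTypeDist n m G ∧
        v = sSup {w : ℝ | ∃ J ∈ Finset.Icc 1 m, ∃ ρ ∈ Set.Ioc (0:ℝ) 1,
          w = innerLP_OST k n m G J ρ (QExAnte k n G)}}
      = sInf {α : ℝ | ∃ q : ℕ → ℝ, (∀ i ∈ Finset.Icc 1 (n-1), q i ∈ Set.Icc (0:ℝ) 1) ∧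
          α = probLt q (n-1) k ∧ α = eMinBer q (n-1) k / k}) :=
  ⟨sInf_bestOST_eq hk hkn (isBenchmark_QProph hk hkn.le),
    sInf_bestOST_eq hk hkn (isBenchmark_QExAnte hk hkn.le)⟩
end

section
/- Fix integers k ≥ 1 and n > k. Then iidLP^{DP/ExAnte}_{k,n} = sup_{τ∈(0,1]} iidLP^{OST(τ)/Proph}_{k,n} = sup_{τ∈(0,1]} iidLP^{OST(τ)/ExAnte}_{k,n} = E[min{Bin(n, k/n), k}]/k. -/
open Finset

/-- `E[min{Bin(n,q), k}]`. -/
noncomputable def eMinBin (n k : ℕ) (q : ℝ) : ℝ :=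
  ∑ d ∈ Finset.range (n+1), (n.choose d : ℝ) * q ^ d * (1-q) ^ (n-d) * min (d : ℝ) (k : ℝ)

/-- The semi-infinite LP `iidLP^{DP/·}_{k,n}` with coefficient function `Q`. -/
noncomputable def iidLP_DP (k n : ℕ) (Q : ℝ → ℝ) : ℝ :=
  sSup {θ : ℝ | ∃ x y, memP k n x y ∧ ∀ q ∈ Set.Ioc (0:ℝ) 1,
    θ * Q q ≤ ∑ i ∈ Finset.Icc 1 n, ∑ l ∈ Finset.Icc 1 k, min (y i l) (q * x i l)}

/-- The semi-infinite LP `iidLP^{OST(τ)/·}_{k,n}` with coefficient function `Q`. -/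
noncomputable def iidLP_OST (k n : ℕ) (τ : ℝ) (Q : ℝ → ℝ) : ℝ :=
  sSup {θ : ℝ | ∃ x y, memP k n x y ∧
    (∀ i ∈ Finset.Icc 1 n, ∀ l ∈ Finset.Icc 1 k, y i l = τ * x i l) ∧
    ∀ q ∈ Set.Ioc (0:ℝ) 1,
      θ * Q q ≤ ∑ i ∈ Finset.Icc 1 n, ∑ l ∈ Finset.Icc 1 k, min (y i l) (q * x i l)}


/-- CDF of Binomial: `H m c q = P(Bin(m,q) ≤ c)`. -/
noncomputable def Hcdf : ℕ → ℕ → ℝ → ℝ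
  | 0, _, _ => 1
  | m+1, 0, q => (1-q) * Hcdf m 0 q
  | m+1, c+1, q => q * Hcdf m c q + (1-q) * Hcdf m (c+1) q

/-- `F m l q = E[min(Bin(m,q), l)]`. -/
noncomputable def Fv (m l : ℕ) (q : ℝ) : ℝ := ∑ j ∈ Finset.range l, (1 - Hcdf m j q)

variable {m c l : ℕ} {q q1 q2 : ℝ}

lemma Hcdf_nonneg (hq0 : 0 ≤ q) (hq1 : q ≤ 1) : ∀ m c, 0 ≤ Hcdf m c q := by
  intro m
  induction m with
  | zero => intro c; simp [Hcdf]
  | succ m ih =>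
    intro c
    cases c with
    | zero => have := ih 0; simp only [Hcdf]; nlinarith
    | succ c => have h1 := ih c; have h2 := ih (c+1); simp only [Hcdf]; nlinarith

lemma Hcdf_le_one (hq0 : 0 ≤ q) (hq1 : q ≤ 1) : ∀ m c, Hcdf m c q ≤ 1 := by
  intro m
  induction m with
  | zero => intro c; simp [Hcdf]
  | succ m ih =>
    intro c
    cases c with
    | zero =>
      have := ih 0; have := Hcdf_nonneg hq0 hq1 m 0; simp only [Hcdf]; nlinarith
    | succ c => have h1 := ih c; have h2 := ih (c+1); simp only [Hcdf]; nlinarith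

lemma Hcdf_mono_c (hq0 : 0 ≤ q) (hq1 : q ≤ 1) : ∀ m c, Hcdf m c q ≤ Hcdf m (c+1) q := by
  intro m
  induction m with
  | zero => intro c; simp [Hcdf]
  | succ m ih =>
    intro c
    cases c with
    | zero =>
      have h1 := ih 0
      have h2 := Hcdf_nonneg hq0 hq1 m 0
      simp only [Hcdf]; nlinarith
    | succ c =>
      have h1 := ih c; have h2 := ih (c+1); simp only [Hcdf]; nlinarith

lemma Hcdf_le_c (hq0 : 0 ≤ q) (hq1 : q ≤ 1) (h : c ≤ c') : Hcdf m c q ≤ Hcdf m c' q := by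
  induction c' with
  | zero => simp_all
  | succ c' ih =>
    rcases Nat.lt_or_ge c (c'+1) with h' | h'
    · exact le_trans (ih (Nat.lt_succ_iff.mp h')) (Hcdf_mono_c hq0 hq1 m c')
    · have : c = c' + 1 := le_antisymm h h'
      simp [this]

lemma Hcdf_anti_q (hq0 : 0 ≤ q1) (hq12 : q1 ≤ q2) (hq1 : q2 ≤ 1) :
    ∀ m c, Hcdf m c q2 ≤ Hcdf m c q1 := by
  intro m
  induction m with
  | zero => intro c; simp [Hcdf]
  | succ m ih =>
    intro c
    cases c with
    | zero =>
      have h1 := ih 0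
      have h2 := Hcdf_nonneg (le_trans hq0 hq12) hq1 m 0
      have h3 := Hcdf_nonneg hq0 (le_trans hq12 hq1) m 0
      simp only [Hcdf]; nlinarith
    | succ c =>
      have h1 := ih c
      have h2 := ih (c+1)
      have h3 := Hcdf_mono_c hq0 (le_trans hq12 hq1) m c
      have h4 := Hcdf_nonneg (le_trans hq0 hq12) hq1 m c
      have h5 := Hcdf_nonneg (le_trans hq0 hq12) hq1 m (c+1)
      simp only [Hcdf]; nlinarith

lemma Hcdf_zero_c : ∀ m, Hcdf m 0 q = (1-q)^m := by
  intro m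
  induction m with
  | zero => simp [Hcdf]
  | succ m ih => simp only [Hcdf, ih]; ring

lemma Hcdf_one_eq_zero : ∀ m c, c < m → Hcdf m c (1:ℝ) = 0 := by
  intro m
  induction m with
  | zero => intro c hc; omega
  | succ m ih =>
    intro c hc
    cases c with
    | zero => simp [Hcdf]
    | succ c => simp only [Hcdf]; rw [ih c (by omega)]; ring

lemma Fv_zero_l : Fv m 0 q = 0 := by simp [Fv]

lemma Fv_succ_l : Fv m (l+1) q = Fv m l q + (1 - Hcdf m l q) := by
  unfold Fv; rw [Finset.sum_range_succ]

lemma Fv_succ_m : ∀ l, Fv (m+1) (l+1) q = Fv m (l+1) q + q * Hcdf m l q := by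
  intro l
  induction l with
  | zero =>
    simp only [Fv, Finset.sum_range_one, Finset.sum_range_succ]
    simp [Hcdf]; ring
  | succ l ih =>
    have e1 : Fv (m+1) (l+1+1) q = Fv (m+1) (l+1) q + (1 - Hcdf (m+1) (l+1) q) := Fv_succ_l
    have e2 : Fv m (l+1+1) q = Fv m (l+1) q + (1 - Hcdf m (l+1) q) := Fv_succ_l
    rw [e1, e2, ih]
    simp only [Hcdf]
    ring

lemma Fv_eq_q_sum : ∀ m, Fv m (l+1) q = q * ∑ i ∈ Finset.range m, Hcdf i l q := by
  intro m
  induction m with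
  | zero =>
    have h0 : ∀ j, Hcdf 0 j q = 1 := fun j => rfl
    simp [Fv, h0]
  | succ m ih => rw [Fv_succ_m, ih, Finset.sum_range_succ]; ring

lemma Fv_nonneg (hq0 : 0 ≤ q) (hq1 : q ≤ 1) : 0 ≤ Fv m l q := by
  apply Finset.sum_nonneg
  intro j _
  have := Hcdf_le_one hq0 hq1 m j
  linarith

lemma Fv_le_l (hq0 : 0 ≤ q) (hq1 : q ≤ 1) : Fv m l q ≤ l := by
  calc Fv m l q ≤ ∑ _j ∈ Finset.range l, (1:ℝ) := by
        apply Finset.sum_le_sum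
        intro j _
        have := Hcdf_nonneg hq0 hq1 m j
        linarith
    _ = l := by simp

lemma Fv_le_mq (hq0 : 0 ≤ q) (hq1 : q ≤ 1) : Fv m l q ≤ m * q := by
  cases l with
  | zero => rw [Fv_zero_l]; exact mul_nonneg (Nat.cast_nonneg m) hq0
  | succ l =>
    rw [Fv_eq_q_sum]
    calc q * ∑ i ∈ Finset.range m, Hcdf i l q ≤ q * ∑ _i ∈ Finset.range m, (1:ℝ) := by
          apply mul_le_mul_of_nonneg_left _ hq0
          exact Finset.sum_le_sum fun i _ => Hcdf_le_one hq0 hq1 i l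
      _ = m * q := by simp [mul_comm]

lemma Fv_mono_q (hq0 : 0 ≤ q1) (hq12 : q1 ≤ q2) (hq1 : q2 ≤ 1) :
    Fv m l q1 ≤ Fv m l q2 := by
  apply Finset.sum_le_sum
  intro j _
  have := Hcdf_anti_q hq0 hq12 hq1 m j
  linarith

lemma Fv_div_anti_q (hq0 : 0 ≤ q1) (hq12 : q1 ≤ q2) (hq1 : q2 ≤ 1) :
    q1 * Fv m l q2 ≤ q2 * Fv m l q1 := by
  cases l with
  | zero => simp [Fv_zero_l]
  | succ l =>
    rw [Fv_eq_q_sum, Fv_eq_q_sum]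
    rw [← mul_assoc, ← mul_assoc, mul_comm q1 q2]
    apply mul_le_mul_of_nonneg_left _ (mul_nonneg (le_trans hq0 hq12) hq0)
    exact Finset.sum_le_sum fun i _ => Hcdf_anti_q hq0 hq12 hq1 i l

lemma Fv_one_eq (hkn : l ≤ m) : Fv m l (1:ℝ) = l := by
  unfold Fv
  rw [Finset.sum_congr rfl (g := fun _ => (1:ℝ)) ?_]
  · simp
  · intro j hj
    rw [Hcdf_one_eq_zero m j (by simp at hj; omega)]
    norm_num

lemma Fv_lower (hq0 : 0 ≤ q) (hq1 : q ≤ 1) (hl : 1 ≤ l) (hm : 1 ≤ m) :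
    q * m * (1-q)^(m-1) ≤ Fv m l q := by
  obtain ⟨l', rfl⟩ : ∃ l', l = l' + 1 := ⟨l - 1, by omega⟩
  rw [Fv_eq_q_sum]
  have key : ∀ i ∈ Finset.range m, (1-q)^(m-1) ≤ Hcdf i l' q := by
    intro i hi
    simp only [Finset.mem_range] at hi
    calc (1-q)^(m-1) ≤ (1-q)^i := by
          apply pow_le_pow_of_le_one (by linarith) (by linarith) (by omega)
      _ = Hcdf i 0 q := (Hcdf_zero_c i).symm
      _ ≤ Hcdf i l' q := Hcdf_le_c hq0 hq1 (Nat.zero_le _)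
  calc q * m * (1-q)^(m-1) = q * ∑ _i ∈ Finset.range m, (1-q)^(m-1) := by
        simp; ring
    _ ≤ q * ∑ i ∈ Finset.range m, Hcdf i l' q := by
        apply mul_le_mul_of_nonneg_left (Finset.sum_le_sum key) hq0

lemma binom_sum_one (q : ℝ) (m : ℕ) :
    ∑ d ∈ Finset.range (m+1), (m.choose d : ℝ) * q^d * (1-q)^(m-d) = 1 := by
  have h := add_pow q (1-q) m
  simp only [add_sub_cancel, one_pow] at h
  have e : ∑ d ∈ Finset.range (m+1), (m.choose d : ℝ) * q^d * (1-q)^(m-d)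
      = ∑ d ∈ Finset.range (m+1), q^d * (1-q)^(m-d) * (m.choose d : ℝ) :=
    Finset.sum_congr rfl fun d _ => by ring
  rw [e]
  exact h.symm

lemma myF_eq : ∀ (m l : ℕ) (q : ℝ),
    (∑ d ∈ Finset.range (m+1), (m.choose d : ℝ) * q^d * (1-q)^(m-d) * min (d:ℝ) (l:ℝ))
      = Fv m l q := by
  intro m
  induction m with
  | zero =>
    intro l q
    have h0 : ∀ j, Hcdf 0 j q = 1 := fun _ => rfl
    simp [Fv, h0, min_eq_left (Nat.cast_nonneg l : (0:ℝ) ≤ l)]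
  | succ m ih =>
    intro l q
    cases l with
    | zero =>
      rw [Fv_zero_l]
      apply Finset.sum_eq_zero
      intro d _
      simp [min_eq_right (Nat.cast_nonneg d : (0:ℝ) ≤ d)]
    | succ l =>
      rw [Finset.sum_range_succ']
      have hmin0 : min ((0:ℕ):ℝ) (((l+1):ℕ):ℝ) = 0 := by
        push_cast
        exact min_eq_left (by positivity)
      have split : ∀ d ∈ Finset.range (m+1),
          (((m+1).choose (d+1) : ℝ)) * q^(d+1) * (1-q)^(m+1-(d+1)) * min (((d+1):ℕ):ℝ) (((l+1):ℕ):ℝ)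
          = q * ((m.choose d : ℝ) * q^d * (1-q)^(m-d) * (min (d:ℝ) (l:ℝ) + 1))
            + (m.choose (d+1) : ℝ) * q^(d+1) * (1-q)^(m-d) * min (((d+1):ℕ):ℝ) (((l+1):ℕ):ℝ) := by
        intro d _
        have hc : (((m+1).choose (d+1)) : ℝ) = (m.choose d : ℝ) + (m.choose (d+1) : ℝ) := by
          rw [Nat.choose_succ_succ]; push_cast; ring
        have hmin : min (((d+1):ℕ):ℝ) (((l+1):ℕ):ℝ) = min (d:ℝ) (l:ℝ) + 1 := by
          push_cast
          rw [← min_add_add_right]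
        have hexp : m + 1 - (d + 1) = m - d := by omega
        rw [hc, hmin, hexp]
        ring
      rw [Finset.sum_congr rfl split, Finset.sum_add_distrib]
      have hA : ∑ d ∈ Finset.range (m+1),
          q * ((m.choose d : ℝ) * q^d * (1-q)^(m-d) * (min (d:ℝ) (l:ℝ) + 1))
          = q * (Fv m l q + 1) := by
        rw [← Finset.mul_sum]
        congr 1
        have expand : ∑ d ∈ Finset.range (m+1),
            (m.choose d : ℝ) * q^d * (1-q)^(m-d) * (min (d:ℝ) (l:ℝ) + 1)
            = (∑ d ∈ Finset.range (m+1), (m.choose d : ℝ) * q^d * (1-q)^(m-d) * min (d:ℝ) (l:ℝ))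
              + ∑ d ∈ Finset.range (m+1), (m.choose d : ℝ) * q^d * (1-q)^(m-d) := by
          rw [← Finset.sum_add_distrib]
          exact Finset.sum_congr rfl fun d _ => by ring
        rw [expand, ih l q, binom_sum_one]
      have hB : ∑ d ∈ Finset.range (m+1),
          (m.choose (d+1) : ℝ) * q^(d+1) * (1-q)^(m-d) * min (((d+1):ℕ):ℝ) (((l+1):ℕ):ℝ)
          = (1-q) * Fv m (l+1) q := by
        have step1 : ∑ d ∈ Finset.range (m+2),
            (m.choose d : ℝ) * q^d * (1-q)^(m+1-d) * min ((d:ℕ):ℝ) (((l+1):ℕ):ℝ)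
            = ∑ d ∈ Finset.range (m+1),
            (m.choose (d+1) : ℝ) * q^(d+1) * (1-q)^(m-d) * min (((d+1):ℕ):ℝ) (((l+1):ℕ):ℝ) := by
          rw [Finset.sum_range_succ']
          have : ∀ d ∈ Finset.range (m+1), (m.choose (d+1) : ℝ) * q^(d+1) * (1-q)^(m+1-(d+1)) * min (((d+1):ℕ):ℝ) (((l+1):ℕ):ℝ)
              = (m.choose (d+1) : ℝ) * q^(d+1) * (1-q)^(m-d) * min (((d+1):ℕ):ℝ) (((l+1):ℕ):ℝ) := by
            intro d _
            have hexp : m + 1 - (d + 1) = m - d := by omega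
            rw [hexp]
          rw [Finset.sum_congr rfl this]
          have hf0 : (m.choose 0 : ℝ) * q^0 * (1-q)^(m+1-0) * min ((0:ℕ):ℝ) (((l+1):ℕ):ℝ) = 0 := by
            rw [hmin0]; ring
          rw [hf0, add_zero]
        have step2 : ∑ d ∈ Finset.range (m+2),
            (m.choose d : ℝ) * q^d * (1-q)^(m+1-d) * min ((d:ℕ):ℝ) (((l+1):ℕ):ℝ)
            = ∑ d ∈ Finset.range (m+1),
            (m.choose d : ℝ) * q^d * (1-q)^(m+1-d) * min ((d:ℕ):ℝ) (((l+1):ℕ):ℝ) := by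
          rw [Finset.sum_range_succ]
          simp [Nat.choose_succ_self]
        have step3 : ∑ d ∈ Finset.range (m+1),
            (m.choose d : ℝ) * q^d * (1-q)^(m+1-d) * min ((d:ℕ):ℝ) (((l+1):ℕ):ℝ)
            = (1-q) * Fv m (l+1) q := by
          rw [← ih (l+1) q, Finset.mul_sum]
          apply Finset.sum_congr rfl
          intro d hd
          simp only [Finset.mem_range] at hd
          have hexp : m + 1 - d = (m - d) + 1 := by omega
          rw [hexp, pow_succ]
          ring
        rw [← step1, step2, step3]
      rw [hA, hB, hmin0]
      rw [Fv_succ_m, Fv_succ_l (l := l)]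
      have : Hcdf m l q = 1 - (Fv m (l+1) q - Fv m l q) := by
        rw [Fv_succ_l (l := l)]; ring
      rw [this]
      ring

lemma eMinBin_eq_Fv (n k : ℕ) (q : ℝ) : eMinBin n k q = Fv n k q := myF_eq n k q

lemma sum_Icc_one (k : ℕ) (f : ℕ → ℝ) :
    ∑ l ∈ Finset.Icc 1 k, f l = ∑ j ∈ Finset.range k, f (j+1) := by
  induction k with
  | zero => simp
  | succ k ih =>
    rw [Finset.sum_Icc_succ_top (by omega), ih, Finset.sum_range_succ]

lemma shift_sum {k : ℕ} (hk : 1 ≤ k) (m : ℕ) (g : ℕ → ℝ) (q : ℝ) :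
    ∑ l ∈ Finset.Icc 1 k, (if l < k then g (l+1) else 0) * Fv m l q
      = ∑ l ∈ Finset.Icc 1 k, g l * Fv m (l-1) q := by
  rw [sum_Icc_one k (fun l => (if l < k then g (l+1) else 0) * Fv m l q),
    sum_Icc_one k (fun l => g l * Fv m (l-1) q)]
  obtain ⟨k', rfl⟩ : ∃ k', k = k'+1 := ⟨k-1, by omega⟩
  have hL : ∑ j ∈ Finset.range (k'+1), (if j+1 < k'+1 then g (j+1+1) else 0) * Fv m (j+1) q
      = ∑ j ∈ Finset.range k', g (j+2) * Fv m (j+1) q := by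
    rw [Finset.sum_range_succ]
    have h0 : (if k'+1 < k'+1 then g (k'+1+1) else 0) * Fv m (k'+1) q = 0 := by simp
    rw [h0, add_zero]
    apply Finset.sum_congr rfl
    intro j hj
    simp only [Finset.mem_range] at hj
    rw [if_pos (by omega)]
  have hR : ∑ j ∈ Finset.range (k'+1), g (j+1) * Fv m (j+1-1) q
      = ∑ j ∈ Finset.range k', g (j+2) * Fv m (j+1) q := by
    rw [Finset.sum_range_succ']
    simp only [Nat.add_sub_cancel]
    rw [Fv_zero_l, mul_zero, add_zero]
  rw [hL, hR]

lemma step_identity {k n : ℕ} {x y : ℕ → ℕ → ℝ} (hmem : memP k n x y) (hk : 1 ≤ k)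
    (i m : ℕ) (hi : 1 ≤ i) (hn : i+1 ≤ n) (q : ℝ) :
    ∑ l ∈ Finset.Icc 1 k, x (i+1) l * Fv m l q
      = ∑ l ∈ Finset.Icc 1 k, (x i l * Fv m l q - y i l * (Fv m l q - Fv m (l-1) q)) := by
  have hrec := hmem.2.2.1 (i+1) (Finset.mem_Icc.mpr ⟨by omega, hn⟩)
  calc ∑ l ∈ Finset.Icc 1 k, x (i+1) l * Fv m l q
      = ∑ l ∈ Finset.Icc 1 k,
          ((x i l - y i l) * Fv m l q + (if l < k then y i (l+1) else 0) * Fv m l q) := by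
        apply Finset.sum_congr rfl
        intro l hl
        rw [hrec l hl]
        simp only [Nat.add_sub_cancel]
        ring
    _ = ∑ l ∈ Finset.Icc 1 k, (x i l - y i l) * Fv m l q
        + ∑ l ∈ Finset.Icc 1 k, (if l < k then y i (l+1) else 0) * Fv m l q :=
        Finset.sum_add_distrib
    _ = ∑ l ∈ Finset.Icc 1 k, (x i l - y i l) * Fv m l q
        + ∑ l ∈ Finset.Icc 1 k, y i l * Fv m (l-1) q := by rw [shift_sum hk]
    _ = ∑ l ∈ Finset.Icc 1 k, (x i l * Fv m l q - y i l * (Fv m l q - Fv m (l-1) q)) := by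
        rw [← Finset.sum_add_distrib]
        exact Finset.sum_congr rfl fun l _ => by ring

lemma Fv_one_l {l : ℕ} (hl : 1 ≤ l) (q : ℝ) : Fv 1 l q = q := by
  obtain ⟨l', rfl⟩ : ∃ l', l = l'+1 := ⟨l-1, by omega⟩
  rw [Fv_eq_q_sum]
  have : Hcdf 0 l' q = 1 := rfl
  simp [this]

lemma key_le {k n : ℕ} {x y : ℕ → ℕ → ℝ} (hmem : memP k n x y) (hk : 1 ≤ k)
    {q : ℝ} (hq0 : 0 < q) (hq1 : q ≤ 1) :
    ∀ d i, 1 ≤ i → i + d = n →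
      ∑ j ∈ Finset.Icc i n, ∑ l ∈ Finset.Icc 1 k, min (y j l) (q * x j l)
        ≤ ∑ l ∈ Finset.Icc 1 k, x i l * Fv (d+1) l q := by
  intro d
  induction d with
  | zero =>
    intro i hi1 hin
    have : i = n := by omega
    subst this
    rw [Finset.Icc_self, Finset.sum_singleton]
    apply Finset.sum_le_sum
    intro l hl
    have hl1 : 1 ≤ l := (Finset.mem_Icc.mp hl).1
    rw [Fv_one_l hl1]
    calc min (y i l) (q * x i l) ≤ q * x i l := min_le_right _ _
      _ = x i l * q := mul_comm _ _
  | succ d ih =>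
    intro i hi1 hin
    have hin' : i ≤ n := by omega
    rw [Finset.Icc_eq_cons_Ioc hin', Finset.sum_cons, ← Finset.Icc_add_one_left_eq_Ioc]
    have hIH := ih (i+1) (by omega) (by omega)
    have hstep := step_identity hmem hk i (d+1) hi1 (by omega) q
    calc ∑ l ∈ Finset.Icc 1 k, min (y i l) (q * x i l)
          + ∑ j ∈ Finset.Icc (i+1) n, ∑ l ∈ Finset.Icc 1 k, min (y j l) (q * x j l)
        ≤ ∑ l ∈ Finset.Icc 1 k, min (y i l) (q * x i l)
          + ∑ l ∈ Finset.Icc 1 k, x (i+1) l * Fv (d+1) l q := by linarith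
      _ = ∑ l ∈ Finset.Icc 1 k, (min (y i l) (q * x i l)
            + (x i l * Fv (d+1) l q - y i l * (Fv (d+1) l q - Fv (d+1) (l-1) q))) := by
          rw [hstep, ← Finset.sum_add_distrib]
      _ ≤ ∑ l ∈ Finset.Icc 1 k, x i l * Fv (d+1+1) l q := by
          apply Finset.sum_le_sum
          intro l hl
          obtain ⟨l', rfl⟩ : ∃ l', l = l'+1 := ⟨l-1, by
            have := (Finset.mem_Icc.mp hl).1; omega⟩
          have hb := hmem.2.2.2 i (Finset.mem_Icc.mpr ⟨hi1, hin'⟩) (l'+1) hl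
          have hh0 := Hcdf_nonneg (le_of_lt hq0) hq1 (d+1) l'
          have hh1 := Hcdf_le_one (le_of_lt hq0) hq1 (d+1) l'
          have e1 : Fv (d+1+1) (l'+1) q = Fv (d+1) (l'+1) q + q * Hcdf (d+1) l' q := Fv_succ_m l'
          have e2 : Fv (d+1) (l'+1) q = Fv (d+1) l' q + (1 - Hcdf (d+1) l' q) := Fv_succ_l
          simp only [Nat.add_sub_cancel]
          rw [e1]
          rcases le_total (y i (l'+1)) (q * x i (l'+1)) with hc | hc
          · rw [min_eq_left hc]
            nlinarith [hb.1, hb.2]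
          · rw [min_eq_right hc]
            nlinarith [hb.1, hb.2]

lemma key_eq {k n : ℕ} {x y : ℕ → ℕ → ℝ} (hmem : memP k n x y) (hk : 1 ≤ k)
    {q : ℝ}
    (hyq : ∀ i ∈ Finset.Icc 1 n, ∀ l ∈ Finset.Icc 1 k, y i l = q * x i l) :
    ∀ d i, 1 ≤ i → i + d = n →
      ∑ j ∈ Finset.Icc i n, ∑ l ∈ Finset.Icc 1 k, min (y j l) (q * x j l)
        = ∑ l ∈ Finset.Icc 1 k, x i l * Fv (d+1) l q := by
  intro d
  induction d with
  | zero =>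
    intro i hi1 hin
    have : i = n := by omega
    subst this
    rw [Finset.Icc_self, Finset.sum_singleton]
    apply Finset.sum_congr rfl
    intro l hl
    have hl1 : 1 ≤ l := (Finset.mem_Icc.mp hl).1
    rw [Fv_one_l hl1, hyq i (Finset.mem_Icc.mpr ⟨hi1, le_rfl⟩) l hl, min_self]
    exact mul_comm _ _
  | succ d ih =>
    intro i hi1 hin
    have hin' : i ≤ n := by omega
    rw [Finset.Icc_eq_cons_Ioc hin', Finset.sum_cons, ← Finset.Icc_add_one_left_eq_Ioc]
    have hIH := ih (i+1) (by omega) (by omega)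
    have hstep := step_identity hmem hk i (d+1) hi1 (by omega) q
    rw [hIH, hstep, ← Finset.sum_add_distrib]
    apply Finset.sum_congr rfl
    intro l hl
    obtain ⟨l', rfl⟩ : ∃ l', l = l'+1 := ⟨l-1, by
      have := (Finset.mem_Icc.mp hl).1; omega⟩
    have e1 : Fv (d+1+1) (l'+1) q = Fv (d+1) (l'+1) q + q * Hcdf (d+1) l' q := Fv_succ_m l'
    have e2 : Fv (d+1) (l'+1) q = Fv (d+1) l' q + (1 - Hcdf (d+1) l' q) := Fv_succ_l
    rw [hyq i (Finset.mem_Icc.mpr ⟨hi1, hin'⟩) (l'+1) hl, min_self]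
    simp only [Nat.add_sub_cancel]
    rw [e1, show Fv (d+1) (l'+1) q - Fv (d+1) l' q = 1 - Hcdf (d+1) l' q from by linarith [e2]]
    ring

lemma sum_x_one {k : ℕ} {x : ℕ → ℕ → ℝ} (hx1 : x 1 k = 1)
    (hx0 : ∀ l, 1 ≤ l → l < k → x 1 l = 0) (hk : 1 ≤ k) (m : ℕ) (q : ℝ) :
    ∑ l ∈ Finset.Icc 1 k, x 1 l * Fv m l q = Fv m k q := by
  rw [Finset.sum_eq_single k]
  · rw [hx1, one_mul]
  · intro l hl hlk
    have hm := Finset.mem_Icc.mp hl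
    rw [hx0 l hm.1 (lt_of_le_of_ne hm.2 hlk), zero_mul]
  · intro h
    exact absurd (Finset.mem_Icc.mpr ⟨hk, le_rfl⟩) h

/-- Main upper bound: any feasible pair is dominated by the prophet value. -/
lemma dp_le {k n : ℕ} {x y : ℕ → ℕ → ℝ} (hmem : memP k n x y) (hk : 1 ≤ k) (hn : 1 ≤ n)
    {q : ℝ} (hq0 : 0 < q) (hq1 : q ≤ 1) :
    ∑ i ∈ Finset.Icc 1 n, ∑ l ∈ Finset.Icc 1 k, min (y i l) (q * x i l) ≤ Fv n k q := by
  have h := key_le hmem hk hq0 hq1 (n-1) 1 le_rfl (by omega)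
  rw [Nat.sub_add_cancel hn] at h
  rwa [sum_x_one hmem.1 hmem.2.1 hk n q] at h

/-- Exact value for static-threshold (proportional) solutions. -/
lemma ost_sum_eq {k n : ℕ} {x y : ℕ → ℕ → ℝ} (hmem : memP k n x y) (hk : 1 ≤ k) (hn : 1 ≤ n)
    {τ : ℝ} (hτ0 : 0 < τ) (hτ1 : τ ≤ 1)
    (hyq : ∀ i ∈ Finset.Icc 1 n, ∀ l ∈ Finset.Icc 1 k, y i l = τ * x i l) :
    τ * (∑ i ∈ Finset.Icc 1 n, ∑ l ∈ Finset.Icc 1 k, x i l) = Fv n k τ := by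
  have h := key_eq hmem hk hyq (n-1) 1 le_rfl (by omega)
  rw [Nat.sub_add_cancel hn, sum_x_one hmem.1 hmem.2.1 hk n τ] at h
  rw [← h, Finset.mul_sum]
  apply Finset.sum_congr rfl
  intro i hi
  rw [Finset.mul_sum]
  apply Finset.sum_congr rfl
  intro l hl
  rw [hyq i hi l hl, min_self]

lemma ost_val {k n : ℕ} {x y : ℕ → ℕ → ℝ} (hmem : memP k n x y) (hk : 1 ≤ k) (hn : 1 ≤ n)
    {τ : ℝ} (hτ0 : 0 < τ) (hτ1 : τ ≤ 1)
    (hyq : ∀ i ∈ Finset.Icc 1 n, ∀ l ∈ Finset.Icc 1 k, y i l = τ * x i l)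
    (q : ℝ) :
    ∑ i ∈ Finset.Icc 1 n, ∑ l ∈ Finset.Icc 1 k, min (y i l) (q * x i l)
      = min τ q / τ * Fv n k τ := by
  have hS := ost_sum_eq hmem hk hn hτ0 hτ1 hyq
  have hL : ∑ i ∈ Finset.Icc 1 n, ∑ l ∈ Finset.Icc 1 k, min (y i l) (q * x i l)
      = min τ q * ∑ i ∈ Finset.Icc 1 n, ∑ l ∈ Finset.Icc 1 k, x i l := by
    rw [Finset.mul_sum]
    apply Finset.sum_congr rfl
    intro i hi
    rw [Finset.mul_sum]
    apply Finset.sum_congr rfl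
    intro l hl
    have hb := hmem.2.2.2 i hi l hl
    have hx : 0 ≤ x i l := le_trans hb.1 hb.2
    rw [hyq i hi l hl, ← min_mul_of_nonneg τ q hx]
  rw [hL, ← hS]
  field_simp

/-- The static-threshold state evolution (index shifted by one). -/
noncomputable def zOST (k : ℕ) (τ : ℝ) : ℕ → ℕ → ℝ
  | 0, l => if l = k then 1 else 0
  | i+1, l => (1-τ) * zOST k τ i l + (if l < k then τ * zOST k τ i (l+1) else 0)

lemma zOST_nonneg {k : ℕ} {τ : ℝ} (hτ0 : 0 ≤ τ) (hτ1 : τ ≤ 1) :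
    ∀ i l, 0 ≤ zOST k τ i l := by
  intro i
  induction i with
  | zero =>
    intro l
    simp only [zOST]
    split <;> norm_num
  | succ i ih =>
    intro l
    simp only [zOST]
    have h1 := ih l
    have h2 := ih (l+1)
    have h3 : 0 ≤ (if l < k then τ * zOST k τ i (l+1) else 0) := by
      split
      · exact mul_nonneg hτ0 h2
      · exact le_refl 0
    have h4 : 0 ≤ (1-τ) * zOST k τ i l := mul_nonneg (by linarith) h1
    exact add_nonneg h4 h3

lemma ost_exists (k n : ℕ) {τ : ℝ} (hτ0 : 0 < τ) (hτ1 : τ ≤ 1) :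
    ∃ x y, memP k n x y ∧
      ∀ i ∈ Finset.Icc 1 n, ∀ l ∈ Finset.Icc 1 k, y i l = τ * x i l := by
  refine ⟨fun i l => zOST k τ (i-1) l, fun i l => τ * zOST k τ (i-1) l, ⟨?_, ?_, ?_, ?_⟩, ?_⟩
  · simp [zOST]
  · intro l _ hlk
    simp [zOST, Nat.ne_of_lt hlk]
  · intro i hi l _
    simp only
    have hi2 : 2 ≤ i := (Finset.mem_Icc.mp hi).1
    have h2 : i - 1 = (i - 2) + 1 := by omega
    rw [h2]
    simp only [Nat.add_sub_cancel, zOST]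
    ring
  · intro i _ l _
    simp only
    have h1 := zOST_nonneg (k := k) (le_of_lt hτ0) hτ1 (i-1) l
    constructor
    · exact mul_nonneg (le_of_lt hτ0) h1
    · nlinarith
  · intro i _ l _
    rfl

section Final

variable {k n : ℕ}

/-- Per-τ upper bound for `OST(τ)/Proph`. -/
lemma ost_bound_proph (hk : 1 ≤ k) (hkn : k < n) {τ : ℝ} (hτ0 : 0 < τ) (hτ1 : τ ≤ 1)
    {θ : ℝ} {x y : ℕ → ℕ → ℝ} (hmem : memP k n x y)
    (hyq : ∀ i ∈ Finset.Icc 1 n, ∀ l ∈ Finset.Icc 1 k, y i l = τ * x i l)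
    (hcon : ∀ q ∈ Set.Ioc (0:ℝ) 1,
      θ * eMinBin n k q ≤ ∑ i ∈ Finset.Icc 1 n, ∑ l ∈ Finset.Icc 1 k, min (y i l) (q * x i l)) :
    θ ≤ Fv n k ((k:ℝ)/(n:ℝ)) / (k:ℝ) := by
  have hn : 1 ≤ n := by omega
  have hn0 : (0:ℝ) < n := by exact_mod_cast (by omega : 0 < n)
  have hk0 : (0:ℝ) < k := by exact_mod_cast hk
  set τs : ℝ := (k:ℝ)/(n:ℝ) with hτs
  have hτs0 : 0 < τs := div_pos hk0 hn0
  have hτs1 : τs ≤ 1 := (div_le_one hn0).mpr (by exact_mod_cast le_of_lt hkn)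
  have hΓ0 : 0 ≤ Fv n k τs / k := div_nonneg (Fv_nonneg (le_of_lt hτs0) hτs1) (le_of_lt hk0)
  rcases le_total τ τs with hcase | hcase
  · -- τ ≤ τ*: use q = 1
    have h1 := hcon 1 ⟨one_pos, le_rfl⟩
    rw [ost_val hmem hk hn hτ0 hτ1 hyq 1] at h1
    rw [eMinBin_eq_Fv, Fv_one_eq (le_of_lt hkn)] at h1
    rw [min_eq_left hτ1, div_self (ne_of_gt hτ0), one_mul] at h1
    have h2 : Fv n k τ ≤ Fv n k τs := Fv_mono_q (le_of_lt hτ0) hcase hτs1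
    rw [le_div_iff₀ hk0]
    linarith
  · -- τ* ≤ τ: limit argument as q → 0⁺
    rcases le_or_gt θ 0 with hθ | hθ
    · linarith
    have hbound : ∀ q ∈ Set.Ioc (0:ℝ) τs, θ * (1-q)^(n-1) ≤ Fv n k τs / (k:ℝ) := by
      intro q hq
      obtain ⟨hq0, hqτs⟩ := hq
      have hq1 : q ≤ 1 := le_trans hqτs hτs1
      have h1 := hcon q ⟨hq0, hq1⟩
      rw [ost_val hmem hk hn hτ0 hτ1 hyq q, min_eq_right (le_trans hqτs hcase),
        eMinBin_eq_Fv] at h1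
      have h2 : q * (n:ℝ) * (1-q)^(n-1) ≤ Fv n k q := Fv_lower (le_of_lt hq0) hq1 hk hn
      have h4 : τs * Fv n k τ ≤ τ * Fv n k τs := Fv_div_anti_q (le_of_lt hτs0) hcase hτ1
      have hk_eq : (k:ℝ) = (n:ℝ) * τs := by rw [hτs]; field_simp
      rw [le_div_iff₀ hk0, hk_eq]
      have hA : θ * (q*(n:ℝ)*(1-q)^(n-1)) ≤ θ * Fv n k q :=
        mul_le_mul_of_nonneg_left h2 (le_of_lt hθ)
      have hB : θ * (q*(n:ℝ)*(1-q)^(n-1)) * τ ≤ q * Fv n k τ := by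
        have hB1 := mul_le_mul_of_nonneg_right (le_trans hA h1) (le_of_lt hτ0)
        calc θ*(q*(n:ℝ)*(1-q)^(n-1)) * τ ≤ q / τ * Fv n k τ * τ := hB1
          _ = q * Fv n k τ := by field_simp
      have hC : θ * (q*(n:ℝ)*(1-q)^(n-1)) * τ * τs ≤ q * (τs * Fv n k τ) := by
        calc θ*(q*(n:ℝ)*(1-q)^(n-1))*τ*τs ≤ q * Fv n k τ * τs :=
              mul_le_mul_of_nonneg_right hB (le_of_lt hτs0)
          _ = q * (τs * Fv n k τ) := by ring
      have hD : q * (τs * Fv n k τ) ≤ q * (τ * Fv n k τs) :=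
        mul_le_mul_of_nonneg_left h4 (le_of_lt hq0)
      have hE : θ * (1-q)^(n-1) * ((n:ℝ)*τs) * (q*τ) ≤ Fv n k τs * (q*τ) := by
        calc θ * (1-q)^(n-1) * ((n:ℝ)*τs) * (q*τ) = θ*(q*(n:ℝ)*(1-q)^(n-1))*τ*τs := by ring
          _ ≤ q * (τ * Fv n k τs) := le_trans hC hD
          _ = Fv n k τs * (q*τ) := by ring
      exact le_of_mul_le_mul_right hE (mul_pos hq0 hτ0)
    have hten : Filter.Tendsto (fun q : ℝ => θ * (1-q)^(n-1)) (nhdsWithin 0 (Set.Ioi 0))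
        (nhds (θ * (1-(0:ℝ))^(n-1))) :=
      ((continuous_const.mul ((continuous_const.sub continuous_id).pow _)).tendsto 0).mono_left
        nhdsWithin_le_nhds
    have hθeq : θ * (1-(0:ℝ))^(n-1) = θ := by norm_num
    rw [← hθeq]
    refine le_of_tendsto hten ?_
    filter_upwards [Ioc_mem_nhdsGT_of_mem (Set.mem_Ico.mpr ⟨le_refl (0:ℝ), hτs0⟩)] with q hq
      using hbound q hq

/-- Per-τ upper bound for `OST(τ)/ExAnte`. -/
lemma ost_bound_exante (hk : 1 ≤ k) (hkn : k < n) {τ : ℝ} (hτ0 : 0 < τ) (hτ1 : τ ≤ 1)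
    {θ : ℝ} {x y : ℕ → ℕ → ℝ} (hmem : memP k n x y)
    (hyq : ∀ i ∈ Finset.Icc 1 n, ∀ l ∈ Finset.Icc 1 k, y i l = τ * x i l)
    (hcon : ∀ q ∈ Set.Ioc (0:ℝ) 1,
      θ * min ((n:ℝ)*q) (k:ℝ) ≤ ∑ i ∈ Finset.Icc 1 n, ∑ l ∈ Finset.Icc 1 k, min (y i l) (q * x i l)) :
    θ ≤ Fv n k ((k:ℝ)/(n:ℝ)) / (k:ℝ) := by
  have hn : 1 ≤ n := by omega
  have hn0 : (0:ℝ) < n := by exact_mod_cast (by omega : 0 < n)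
  have hk0 : (0:ℝ) < k := by exact_mod_cast hk
  set τs : ℝ := (k:ℝ)/(n:ℝ) with hτs
  have hτs0 : 0 < τs := div_pos hk0 hn0
  have hτs1 : τs ≤ 1 := (div_le_one hn0).mpr (by exact_mod_cast le_of_lt hkn)
  have hnτs : (n:ℝ) * τs = k := by rw [hτs]; field_simp
  have h1 := hcon τs ⟨hτs0, hτs1⟩
  rw [ost_val hmem hk hn hτ0 hτ1 hyq τs, hnτs, min_self] at h1
  rw [le_div_iff₀ hk0]
  rcases le_total τ τs with hcase | hcase
  · rw [min_eq_left hcase, div_self (ne_of_gt hτ0), one_mul] at h1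
    have h2 : Fv n k τ ≤ Fv n k τs := Fv_mono_q (le_of_lt hτ0) hcase hτs1
    linarith
  · rw [min_eq_right hcase] at h1
    have h4 : τs * Fv n k τ ≤ τ * Fv n k τs := Fv_div_anti_q (le_of_lt hτs0) hcase hτ1
    have h5 : τs / τ * Fv n k τ ≤ Fv n k τs := by
      rw [div_mul_eq_mul_div, div_le_iff₀ hτ0]
      calc τs * Fv n k τ ≤ τ * Fv n k τs := h4
        _ = Fv n k τs * τ := by ring
    linarith

end Final

section Assemble

variable {k n : ℕ}

lemma feas_exante (hk : 1 ≤ k) (hkn : k < n) {q : ℝ} (hq : q ∈ Set.Ioc (0:ℝ) 1) :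
    Fv n k ((k:ℝ)/(n:ℝ)) / (k:ℝ) * min ((n:ℝ)*q) (k:ℝ)
      ≤ min ((k:ℝ)/(n:ℝ)) q / ((k:ℝ)/(n:ℝ)) * Fv n k ((k:ℝ)/(n:ℝ)) := by
  have hn0 : (0:ℝ) < n := by exact_mod_cast (by omega : 0 < n)
  have hk0 : (0:ℝ) < k := by exact_mod_cast hk
  apply le_of_eq
  have hmin : min ((n:ℝ)*q) (k:ℝ) = (n:ℝ) * min q ((k:ℝ)/(n:ℝ)) := by
    have h1 : min q ((k:ℝ)/(n:ℝ)) * (n:ℝ) = min (q*(n:ℝ)) (((k:ℝ)/(n:ℝ))*(n:ℝ)) :=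
      min_mul_of_nonneg _ _ (le_of_lt hn0)
    have h2 : ((k:ℝ)/(n:ℝ))*(n:ℝ) = (k:ℝ) := by field_simp
    rw [h2] at h1
    calc min ((n:ℝ)*q) (k:ℝ) = min (q*(n:ℝ)) (k:ℝ) := by rw [mul_comm]
      _ = min q ((k:ℝ)/(n:ℝ)) * (n:ℝ) := h1.symm
      _ = (n:ℝ) * min q ((k:ℝ)/(n:ℝ)) := mul_comm _ _
  rw [hmin, min_comm q ((k:ℝ)/(n:ℝ))]
  generalize min ((k:ℝ)/(n:ℝ)) q = M
  field_simp

lemma feas_proph (hk : 1 ≤ k) (hkn : k < n) {q : ℝ} (hq : q ∈ Set.Ioc (0:ℝ) 1) :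
    Fv n k ((k:ℝ)/(n:ℝ)) / (k:ℝ) * Fv n k q
      ≤ min ((k:ℝ)/(n:ℝ)) q / ((k:ℝ)/(n:ℝ)) * Fv n k ((k:ℝ)/(n:ℝ)) := by
  have hn0 : (0:ℝ) < n := by exact_mod_cast (by omega : 0 < n)
  have hk0 : (0:ℝ) < k := by exact_mod_cast hk
  have hτs0 : 0 < (k:ℝ)/(n:ℝ) := div_pos hk0 hn0
  have hτs1 : (k:ℝ)/(n:ℝ) ≤ 1 := (div_le_one hn0).mpr (by exact_mod_cast le_of_lt hkn)
  have hΓ0 : 0 ≤ Fv n k ((k:ℝ)/(n:ℝ)) / (k:ℝ) :=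
    div_nonneg (Fv_nonneg (le_of_lt hτs0) hτs1) (le_of_lt hk0)
  obtain ⟨hq0, hq1⟩ := hq
  rcases le_total q ((k:ℝ)/(n:ℝ)) with hcase | hcase
  · calc Fv n k ((k:ℝ)/(n:ℝ)) / (k:ℝ) * Fv n k q
        ≤ Fv n k ((k:ℝ)/(n:ℝ)) / (k:ℝ) * ((n:ℝ)*q) := by
          apply mul_le_mul_of_nonneg_left _ hΓ0
          have := Fv_le_mq (m := n) (l := k) (le_of_lt hq0) hq1
          linarith [this]
      _ = q / ((k:ℝ)/(n:ℝ)) * Fv n k ((k:ℝ)/(n:ℝ)) := by field_simp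
      _ = min ((k:ℝ)/(n:ℝ)) q / ((k:ℝ)/(n:ℝ)) * Fv n k ((k:ℝ)/(n:ℝ)) := by
          rw [min_eq_right hcase]
  · calc Fv n k ((k:ℝ)/(n:ℝ)) / (k:ℝ) * Fv n k q
        ≤ Fv n k ((k:ℝ)/(n:ℝ)) / (k:ℝ) * (k:ℝ) := by
          apply mul_le_mul_of_nonneg_left _ hΓ0
          exact Fv_le_l (le_of_lt hq0) hq1
      _ = Fv n k ((k:ℝ)/(n:ℝ)) := by field_simp
      _ = min ((k:ℝ)/(n:ℝ)) q / ((k:ℝ)/(n:ℝ)) * Fv n k ((k:ℝ)/(n:ℝ)) := by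
          rw [min_eq_left hcase, div_self (ne_of_gt hτs0), one_mul]

end Assemble


/-- Theorem `iidST`:
`iidLP^{DP/ExAnte}_{k,n} = sup_τ iidLP^{OST(τ)/Proph}_{k,n} = sup_τ iidLP^{OST(τ)/ExAnte}_{k,n}
 = E[min{Bin(n,k/n),k}]/k`. -/
theorem stmt14 (k n : ℕ) (hk : 1 ≤ k) (hkn : k < n) :
    iidLP_DP k n (fun q => min ((n : ℝ) * q) (k : ℝ))
        = sSup {v : ℝ | ∃ τ ∈ Set.Ioc (0:ℝ) 1, v = iidLP_OST k n τ (fun q => eMinBin n k q)} ∧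
    sSup {v : ℝ | ∃ τ ∈ Set.Ioc (0:ℝ) 1, v = iidLP_OST k n τ (fun q => eMinBin n k q)}
        = sSup {v : ℝ | ∃ τ ∈ Set.Ioc (0:ℝ) 1,
            v = iidLP_OST k n τ (fun q => min ((n : ℝ) * q) (k : ℝ))} ∧
    sSup {v : ℝ | ∃ τ ∈ Set.Ioc (0:ℝ) 1,
        v = iidLP_OST k n τ (fun q => min ((n : ℝ) * q) (k : ℝ))}
      = eMinBin n k ((k : ℝ) / (n : ℝ)) / (k : ℝ) := by
  have hn : 1 ≤ n := by omega
  have hn0 : (0:ℝ) < n := by exact_mod_cast (by omega : 0 < n)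
  have hk0 : (0:ℝ) < k := by exact_mod_cast hk
  have hτs0 : 0 < (k:ℝ)/(n:ℝ) := div_pos hk0 hn0
  have hτs1 : (k:ℝ)/(n:ℝ) ≤ 1 := (div_le_one hn0).mpr (by exact_mod_cast le_of_lt hkn)
  have hnτs : (n:ℝ) * ((k:ℝ)/(n:ℝ)) = k := by field_simp
  have hΓ0 : 0 ≤ Fv n k ((k:ℝ)/(n:ℝ)) / (k:ℝ) :=
    div_nonneg (Fv_nonneg (le_of_lt hτs0) hτs1) (le_of_lt hk0)
  obtain ⟨x₀, y₀, hmem₀, hyq₀⟩ := ost_exists k n hτs0 hτs1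
  have hval : ∀ q : ℝ, ∑ i ∈ Finset.Icc 1 n, ∑ l ∈ Finset.Icc 1 k, min (y₀ i l) (q * x₀ i l)
      = min ((k:ℝ)/(n:ℝ)) q / ((k:ℝ)/(n:ℝ)) * Fv n k ((k:ℝ)/(n:ℝ)) :=
    fun q => ost_val hmem₀ hk hn hτs0 hτs1 hyq₀ q
  -- DP/ExAnte equals Γ
  have hDP : iidLP_DP k n (fun q => min ((n : ℝ) * q) (k : ℝ)) = Fv n k ((k:ℝ)/(n:ℝ)) / (k:ℝ) := by
    rw [iidLP_DP]
    apply IsGreatest.csSup_eq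
    constructor
    · refine ⟨x₀, y₀, hmem₀, fun q hq => ?_⟩
      rw [hval q]
      exact feas_exante hk hkn hq
    · rintro θ ⟨x, y, hmem, hcon⟩
      have h1 := hcon ((k:ℝ)/(n:ℝ)) ⟨hτs0, hτs1⟩
      simp only [hnτs, min_self] at h1
      have h2 := dp_le hmem hk hn hτs0 hτs1
      rw [le_div_iff₀ hk0]
      linarith
  -- OST(τ*)/Proph equals Γ
  have hOSTproph : iidLP_OST k n ((k:ℝ)/(n:ℝ)) (fun q => eMinBin n k q)
      = Fv n k ((k:ℝ)/(n:ℝ)) / (k:ℝ) := by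
    rw [iidLP_OST]
    apply IsGreatest.csSup_eq
    constructor
    · refine ⟨x₀, y₀, hmem₀, hyq₀, fun q hq => ?_⟩
      rw [hval q]
      simp only [eMinBin_eq_Fv]
      exact feas_proph hk hkn hq
    · rintro θ ⟨x, y, hmem, hyq, hcon⟩
      exact ost_bound_proph hk hkn hτs0 hτs1 hmem hyq hcon
  -- OST(τ*)/ExAnte equals Γ
  have hOSTexante : iidLP_OST k n ((k:ℝ)/(n:ℝ)) (fun q => min ((n : ℝ) * q) (k : ℝ))
      = Fv n k ((k:ℝ)/(n:ℝ)) / (k:ℝ) := by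
    rw [iidLP_OST]
    apply IsGreatest.csSup_eq
    constructor
    · refine ⟨x₀, y₀, hmem₀, hyq₀, fun q hq => ?_⟩
      rw [hval q]
      exact feas_exante hk hkn hq
    · rintro θ ⟨x, y, hmem, hyq, hcon⟩
      exact ost_bound_exante hk hkn hτs0 hτs1 hmem hyq hcon
  have hVB : sSup {v : ℝ | ∃ τ ∈ Set.Ioc (0:ℝ) 1, v = iidLP_OST k n τ (fun q => eMinBin n k q)}
      = Fv n k ((k:ℝ)/(n:ℝ)) / (k:ℝ) := by
    apply IsGreatest.csSup_eq
    constructor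
    · exact ⟨(k:ℝ)/(n:ℝ), ⟨hτs0, hτs1⟩, hOSTproph.symm⟩
    · rintro v ⟨τ, hτ, rfl⟩
      rw [iidLP_OST]
      apply Real.sSup_le _ hΓ0
      rintro θ ⟨x, y, hmem, hyq, hcon⟩
      exact ost_bound_proph hk hkn hτ.1 hτ.2 hmem hyq hcon
  have hVC : sSup {v : ℝ | ∃ τ ∈ Set.Ioc (0:ℝ) 1,
      v = iidLP_OST k n τ (fun q => min ((n : ℝ) * q) (k : ℝ))}
      = Fv n k ((k:ℝ)/(n:ℝ)) / (k:ℝ) := by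
    apply IsGreatest.csSup_eq
    constructor
    · exact ⟨(k:ℝ)/(n:ℝ), ⟨hτs0, hτs1⟩, hOSTexante.symm⟩
    · rintro v ⟨τ, hτ, rfl⟩
      rw [iidLP_OST]
      apply Real.sSup_le _ hΓ0
      rintro θ ⟨x, y, hmem, hyq, hcon⟩
      exact ost_bound_exante hk hkn hτ.1 hτ.2 hmem hyq hcon
  refine ⟨?_, ?_, ?_⟩
  · rw [hDP, hVB]
  · rw [hVB, hVC]
  · rw [hVC, eMinBin_eq_Fv]
end

section
/- For every integer n ≥ 2, iidLP^{DP/Proph}_{1,n} = LPrelax_n. -/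
/-!
Write `n = m + 1` and `C = 1/θ - 1`.

If `y` is feasible for `iidLP1`, let `R_k` be the mass left after `k` rounds and
`S_I = ∑_{I ≤ k ≤ m} R_k`. Bounding the first `I` terms of the constraint by `y` and the others by
`κ R`, the constraint for `κ` gives `(1 - (1-κ)^n) θ ≤ 1 - R_I + κ S_I`. Letting `κ → 0` at `I = 0`
gives `S_0 ≥ nθ`, and taking `κ = 1 - x^{1/m}` for `x = S_I/(nθ) < 1` shows that
`min 1 (S_I/(nθ))` is feasible for `LPrelax`.

Conversely, replacing a feasible `z` by its suffix maximum keeps it feasible, so `z` may be taken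
antitone. Then `u_I = z_I^{1/m}` satisfies `m u_I^{m+1} ≤ (m+1) u_{I+1}^m + C`, and with
`φ(v) = (m+1) v^m - m v^{m+1}` the choice `y_i = θ (φ(u_{i-1}) - φ(u_i))` is feasible for `iidLP1`:
for `κ = 1 - t` the constraint telescopes against a potential whose increments are controlled by
weighted AM-GM.

So both suprema range over the same positive values, and `1/n` is feasible for both.
-/

open Finset

/-- `iidLP^{DP/Proph}_{1,n}` in its single-unit form. -/
noncomputable def iidLP1 (n : ℕ) : ℝ :=
  sSup {θ : ℝ | ∃ y : ℕ → ℝ,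
    (∀ i ∈ Finset.Icc 1 n, 0 ≤ y i) ∧
    (∑ i ∈ Finset.Icc 1 n, y i ≤ 1) ∧
    ∀ κ ∈ Set.Ioc (0:ℝ) 1,
      (1 - (1 - κ) ^ n) * θ ≤
        ∑ i ∈ Finset.Icc 1 n, min (y i) (κ * (1 - ∑ i' ∈ Finset.Icc 1 (i-1), y i'))}

/-- `LPrelax n`. -/
noncomputable def LPrelax (n : ℕ) : ℝ :=
  sSup {θ : ℝ | 0 < θ ∧ ∃ z : ℕ → ℝ, z 0 = 1 ∧ z n = 0 ∧
    (∀ i, 1 ≤ i → i ≤ n - 1 → z i ∈ Set.Icc (0:ℝ) 1) ∧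
    (∀ I, I ≤ n - 1 →
      ((n : ℝ) - 1) * z I ^ ((n : ℝ) / ((n : ℝ) - 1)) ≤ (n : ℝ) * z (I+1) + 1/θ - 1)}

namespace ProphetLP

lemma sum_Icc_one_eq_sum_range {M : Type*} [AddCommMonoid M] (f : ℕ → M) (n : ℕ) :
    ∑ i ∈ Icc 1 n, f i = ∑ i ∈ range n, f (i + 1) := by
  rw [range_eq_Ico, sum_Ico_add' f 0 n 1, zero_add, Ico_add_one_right_eq_Icc]

lemma sum_Icc_one_sub {G : Type*} [AddCommGroup G] (f : ℕ → G) (n : ℕ) :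
    ∑ i ∈ Icc 1 n, (f (i - 1) - f i) = f 0 - f n := by
  rw [sum_Icc_one_eq_sum_range]
  simp only [Nat.add_sub_cancel]
  exact sum_range_sub' f n

lemma sub_le_sum_of_le_add {G : Type*} [AddCommGroup G] [PartialOrder G] [IsOrderedAddMonoid G]
    {a b : ℕ → G} {n : ℕ} (h : ∀ i < n, a i ≤ b i + a (i + 1)) :
    a 0 - a n ≤ ∑ i ∈ range n, b i := by
  rw [← sum_range_sub']
  exact sum_le_sum fun i hi => sub_le_iff_le_add.2 (h i (mem_range.1 hi))

lemma succ_mul_mul_pow_le (m : ℕ) {a b : ℝ} (ha : 0 ≤ a) (hb : 0 ≤ b) :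
    (m + 1) * a * b ^ m ≤ a ^ (m + 1) + m * b ^ (m + 1) := by
  rcases hb.eq_or_lt with rfl | hb
  · rcases m with _ | m <;> simp [pow_nonneg ha]
  -- Bernoulli's inequality at `a / b`
  have h := one_add_mul_le_pow (a := a / b - 1) (by linarith [div_nonneg ha hb.le]) (m + 1)
  rw [add_sub_cancel, div_pow, le_div_iff₀ (pow_pos hb _)] at h
  have e : (1 + ((m + 1 : ℕ) : ℝ) * (a / b - 1)) * b ^ (m + 1)
      = (m + 1) * a * b ^ m - m * b ^ (m + 1) := by
    field_simp; push_cast; ring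
  linarith

lemma rpow_inv_natCast_pow_succ {x : ℝ} (hx : 0 ≤ x) (m : ℕ) :
    (x ^ ((m : ℝ)⁻¹)) ^ (m + 1) = x ^ (((m : ℝ) + 1) / m) := by
  rw [← Real.rpow_natCast, ← Real.rpow_mul hx]
  push_cast
  ring_nf

lemma nat_mul_le_of_forall_one_sub_pow_mul_le {n : ℕ} {a b : ℝ}
    (h : ∀ κ ∈ Set.Ioc (0 : ℝ) 1, (1 - (1 - κ) ^ n) * a ≤ κ * b) : n * a ≤ b := by
  have hlim : Filter.Tendsto (fun κ : ℝ => (∑ i ∈ range n, (1 - κ) ^ i) * a)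
      (nhdsWithin 0 (Set.Ioi 0)) (nhds (n * a)) := by
    have hc : Continuous fun κ : ℝ => (∑ i ∈ range n, (1 - κ) ^ i) * a := by fun_prop
    simpa using (hc.tendsto 0).mono_left nhdsWithin_le_nhds
  refine le_of_tendsto hlim ?_
  filter_upwards [Ioc_mem_nhdsGT zero_lt_one] with κ hκ
  have hgeom : 1 - (1 - κ) ^ n = κ * ∑ i ∈ range n, (1 - κ) ^ i := by
    linear_combination geom_sum_mul (1 - κ) n
  have := h κ hκ
  rw [hgeom, mul_assoc] at this
  exact le_of_mul_le_mul_left this hκ.1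

/-- The maximum of `f` on `[I, n]` (junk value `f n` when `n < I`). -/
def suffixMax {α : Type*} [LinearOrder α] (f : ℕ → α) (n I : ℕ) : α :=
  (insert n (Icc I n)).sup' (insert_nonempty _ _) f

section suffixMax

variable {α : Type*} [LinearOrder α] {f : ℕ → α} {n I : ℕ}

lemma le_suffixMax {J : ℕ} (hIJ : I ≤ J) (hJn : J ≤ n) : f J ≤ suffixMax f n I :=
  le_sup' f (mem_insert_of_mem (mem_Icc.2 ⟨hIJ, hJn⟩))

lemma suffixMax_mem {s : Set α} (hf : ∀ J ≤ n, f J ∈ s) : suffixMax f n I ∈ s := by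
  obtain ⟨J, hJ, heq⟩ := exists_mem_eq_sup' (insert_nonempty n (Icc I n)) f
  rw [suffixMax, heq]
  rcases mem_insert.1 hJ with rfl | hJ
  · exact hf J le_rfl
  · exact hf J (mem_Icc.1 hJ).2

lemma suffixMax_succ_le : suffixMax f n (I + 1) ≤ suffixMax f n I :=
  sup'_mono f (insert_subset_insert n (Icc_subset_Icc_left I.le_succ)) _

lemma suffixMax_eq_max (h : I < n) : suffixMax f n I = max (f I) (suffixMax f n (I + 1)) := by
  have : insert n (Icc I n) = insert I (insert n (Icc (I + 1) n)) := by
    ext x; simp only [mem_insert, mem_Icc]; omega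
  rw [suffixMax, suffixMax, sup'_congr (insert_nonempty _ _) this fun _ _ => rfl, sup'_insert]

lemma suffixMax_self : suffixMax f n n = f n := by
  simp [suffixMax]

end suffixMax

def IidLPFeasible (n : ℕ) (θ : ℝ) (y : ℕ → ℝ) : Prop :=
  (∀ i ∈ Finset.Icc 1 n, 0 ≤ y i) ∧
    (∑ i ∈ Finset.Icc 1 n, y i ≤ 1) ∧
    ∀ κ ∈ Set.Ioc (0:ℝ) 1,
      (1 - (1 - κ) ^ n) * θ ≤
        ∑ i ∈ Finset.Icc 1 n, min (y i) (κ * (1 - ∑ i' ∈ Finset.Icc 1 (i-1), y i'))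

def RelaxFeasible (n : ℕ) (θ : ℝ) (z : ℕ → ℝ) : Prop :=
  z 0 = 1 ∧ z n = 0 ∧
    (∀ i, 1 ≤ i → i ≤ n - 1 → z i ∈ Set.Icc (0:ℝ) 1) ∧
    (∀ I, I ≤ n - 1 →
      ((n : ℝ) - 1) * z I ^ ((n : ℝ) / ((n : ℝ) - 1)) ≤ (n : ℝ) * z (I+1) + 1/θ - 1)

lemma relaxFeasible_succ_iff {m : ℕ} {θ : ℝ} {z : ℕ → ℝ} :
    RelaxFeasible (m + 1) θ z ↔ z 0 = 1 ∧ z (m + 1) = 0 ∧ (∀ I ≤ m + 1, z I ∈ Set.Icc 0 1) ∧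
      ∀ I ≤ m, m * z I ^ (((m : ℝ) + 1) / m) ≤ (m + 1) * z (I + 1) + 1 / θ - 1 := by
  simp only [RelaxFeasible, Nat.cast_add, Nat.cast_one, add_sub_cancel_right]
  constructor
  · rintro ⟨h0, hlast, hmem, hc⟩
    refine ⟨h0, hlast, fun I hI => ?_, hc⟩
    rcases Nat.eq_zero_or_pos I with rfl | hI0
    · simp [h0]
    rcases hI.lt_or_eq with hI | rfl
    · exact hmem I hI0 (by omega)
    · simp [hlast]
  · rintro ⟨h0, hlast, hmem, hc⟩
    exact ⟨h0, hlast, fun i _ hi => hmem i (by omega), hc⟩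

lemma mul_rpow_min_le {m : ℕ} (hm : m ≠ 0) {θ a S : ℝ} (hθ : 0 < θ) (ha : a ≤ 1) (hS : 0 ≤ S)
    (hκ : ∀ κ ∈ Set.Ioc (0 : ℝ) 1, (1 - (1 - κ) ^ (m + 1)) * θ ≤ 1 - a + κ * S) :
    m * min 1 (S / ((m + 1) * θ)) ^ (((m : ℝ) + 1) / m) ≤ (S - a) / θ + 1 / θ - 1 := by
  have hmθ : 0 < ((m : ℝ) + 1) * θ := by positivity
  rw [show (S - a) / θ + 1 / θ - 1 = (S - a + 1 - θ) / θ by field_simp, le_div_iff₀ hθ]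
  rcases le_or_gt ((m + 1) * θ) S with hbig | hsmall
  · rw [min_eq_left ((one_le_div hmθ).2 hbig), Real.one_rpow]
    linarith
  set x := S / ((m + 1) * θ)
  have hx0 : 0 ≤ x := div_nonneg hS hmθ.le
  have hx1 : x < 1 := (div_lt_one hmθ).2 hsmall
  rw [min_eq_right hx1.le]
  -- test the constraint at `κ = 1 - u` with `u ^ m = x`
  set u := x ^ ((m : ℝ)⁻¹)
  have hu0 : 0 ≤ u := Real.rpow_nonneg hx0 _
  have hu1 : u < 1 := Real.rpow_lt_one hx0 hx1 (inv_pos.2 (by exact_mod_cast Nat.pos_of_ne_zero hm))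
  have hum : u ^ m = x := Real.rpow_inv_natCast_pow hx0 hm
  rw [← rpow_inv_natCast_pow_succ hx0]
  have h := hκ (1 - u) ⟨by linarith, by linarith⟩
  have hS' : S = (m + 1) * θ * u ^ m := by rw [hum, mul_div_cancel₀ _ hmθ.ne']
  rw [sub_sub_cancel, hS'] at h
  rw [hS']
  linear_combination h

lemma exists_relaxFeasible_of_iidLPFeasible {m : ℕ} (hm : m ≠ 0) {θ : ℝ} (hθ : 0 < θ)
    {y : ℕ → ℝ} (hy : IidLPFeasible (m + 1) θ y) : ∃ z, RelaxFeasible (m + 1) θ z := by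
  obtain ⟨hy0, hy1, hκ⟩ := hy
  rw [sum_Icc_one_eq_sum_range] at hy1
  -- `R k` is the mass left after the first `k` rounds, `S I` the total of `R` over `[I, m]`
  set R : ℕ → ℝ := fun k => 1 - ∑ i ∈ range k, y (i + 1)
  set S : ℕ → ℝ := fun I => ∑ k ∈ Ico I (m + 1), R k
  have hR : ∀ k ≤ m + 1, R k ∈ Set.Icc 0 1 := by
    intro k hk
    have hy0' : ∀ i ∈ range (m + 1), 0 ≤ y (i + 1) := fun i hi =>
      hy0 _ (mem_Icc.2 ⟨by omega, by simpa using hi⟩)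
    constructor
    · linarith [sum_le_sum_of_subset_of_nonneg (range_mono hk) fun i hi _ => hy0' i hi]
    · linarith [sum_nonneg fun i hi => hy0' i (range_mono hk hi)]
  have hS : ∀ I, 0 ≤ S I := fun I => sum_nonneg fun k hk => (hR k (by simp at hk; omega)).1
  have hSsucc : ∀ I ≤ m, S I - R I = S (I + 1) := fun I hI => by
    simp only [S, sum_eq_sum_Ico_succ_bot (by omega : I < m + 1)]; ring
  have htail : ∀ I ≤ m + 1, ∀ κ ∈ Set.Ioc (0 : ℝ) 1,
      (1 - (1 - κ) ^ (m + 1)) * θ ≤ 1 - R I + κ * S I := by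
    intro I hI κ hκ'
    refine (hκ κ hκ').trans ?_
    rw [sum_Icc_one_eq_sum_range, ← sum_range_add_sum_Ico _ hI, mul_sum]
    refine add_le_add ((sum_le_sum fun k _ => min_le_left _ _).trans_eq (by simp [R]))
      (sum_le_sum fun k _ => (min_le_right _ _).trans_eq ?_)
    simp [R, sum_Icc_one_eq_sum_range]
  have hmθ : 0 < ((m : ℝ) + 1) * θ := by positivity
  have hS0 : ((m : ℝ) + 1) * θ ≤ S 0 := by
    have := nat_mul_le_of_forall_one_sub_pow_mul_le fun κ hκ' => by
      simpa [R] using htail 0 (Nat.zero_le _) κ hκ'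
    exact_mod_cast this
  refine ⟨fun I => min 1 (S I / ((m + 1) * θ)), relaxFeasible_succ_iff.2
    ⟨min_eq_left ((one_le_div hmθ).2 hS0), by simp [S], fun I _ =>
      ⟨le_min zero_le_one (div_nonneg (hS I) hmθ.le), min_le_left _ _⟩, fun I hI => ?_⟩⟩
  have h := mul_rpow_min_le hm hθ (hR I (by omega)).2 (hS I) (htail I (by omega))
  rw [hSsucc I hI] at h
  rw [mul_min_of_nonneg _ _ (by positivity), mul_one,
    show ((m : ℝ) + 1) * (S (I + 1) / ((m + 1) * θ)) = S (I + 1) / θ by field_simp]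
  have hz1 : min 1 (S I / ((m + 1) * θ)) ^ (((m : ℝ) + 1) / m) ≤ 1 :=
    Real.rpow_le_one (le_min zero_le_one (div_nonneg (hS I) hmθ.le)) (min_le_left _ _)
      (by positivity)
  rcases min_choice ((m : ℝ) + 1) (S (I + 1) / θ) with hmin | hmin <;> rw [hmin]
  · have : 0 < 1 / θ := by positivity
    nlinarith
  · exact h

noncomputable def phi (m : ℕ) (v : ℝ) : ℝ := (m + 1) * v ^ m - m * v ^ (m + 1)

section phi

variable {m : ℕ}

lemma phi_sub_pow_le {a b : ℝ} (ha : 0 ≤ a) (hb : 0 ≤ b) :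
    phi m b - a ^ (m + 1) ≤ (m + 1) * b ^ m * (1 - a) := by
  unfold phi; linarith [succ_mul_mul_pow_le m ha hb]

lemma phi_sub_pow_self (b : ℝ) : phi m b - b ^ (m + 1) = (m + 1) * b ^ m * (1 - b) := by
  unfold phi; ring

lemma phi_one : phi m 1 = 1 := by simp [phi]

lemma phi_nonneg {v : ℝ} (hv0 : 0 ≤ v) (hv1 : v ≤ 1) : 0 ≤ phi m v := by
  have : phi m v = v ^ m * (m + 1 - m * v) := by unfold phi; ring
  rw [this]
  exact mul_nonneg (pow_nonneg hv0 m) (by nlinarith [(Nat.cast_nonneg m : (0:ℝ) ≤ m)])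

lemma phi_mono {a b : ℝ} (ha : 0 ≤ a) (hab : a ≤ b) (hb : b ≤ 1) : phi m a ≤ phi m b := by
  have h1 := phi_sub_pow_le (m := m) (ha.trans hab) ha
  have h2 : 0 ≤ (m + 1) * (b ^ m - a ^ m) * (1 - b) :=
    mul_nonneg (mul_nonneg (by positivity) (sub_nonneg.2 (pow_le_pow_left₀ ha hab m)))
      (sub_nonneg.2 hb)
  linarith [phi_sub_pow_self (m := m) b]

lemma phi_zero (hm : m ≠ 0) : phi m 0 = 0 := by simp [phi, hm]

end phi

/-- If `u₀ = 1 ≥ u₁ ≥ ⋯ ≥ u_{m+1} = 0`, then `potential m t (u I)` bounds from below the tail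
`∑_{i ≥ I} min (φ uᵢ - φ uᵢ₊₁) ((1 - t) (C + φ uᵢ))`. -/
noncomputable def potential (m : ℕ) (t v : ℝ) : ℝ :=
  if t ≤ v then phi m v - t ^ (m + 1) else (m + 1) * v ^ m * (1 - t)

section potential

variable {m : ℕ}

lemma potential_one {t : ℝ} (ht : t ≤ 1) : potential m t 1 = 1 - t ^ (m + 1) := by
  simp [potential, ht, phi_one]

lemma potential_zero_nonpos (hm : m ≠ 0) {t : ℝ} (ht : 0 ≤ t) : potential m t 0 ≤ 0 := by
  unfold potential
  split_ifs with h
  · simp [phi, hm, le_antisymm h ht]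
  · simp [hm]

lemma potential_le_add {C t v v' : ℝ} (hC : 0 ≤ C) (hv : 0 ≤ v) (hvv' : v ≤ v') (hv' : v' ≤ 1)
    (ht0 : 0 ≤ t) (ht1 : t ≤ 1) (hchain : m * v' ^ (m + 1) ≤ (m + 1) * v ^ m + C) :
    potential m t v' ≤ min (phi m v' - phi m v) ((1 - t) * (C + phi m v')) + potential m t v := by
  have hv'0 : 0 ≤ v' := hv.trans hvv'
  have hpow : v ^ m ≤ v' ^ m := pow_le_pow_left₀ hv hvv' m
  have hD : (m + 1) * (v' ^ m - v ^ m) ≤ C + phi m v' := by unfold phi; linarith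
  have hD0 : 0 ≤ C + phi m v' := add_nonneg hC (phi_nonneg hv'0 hv')
  rw [← sub_le_iff_le_add]
  unfold potential
  split_ifs with h h'
  · have := mul_le_mul_of_nonneg_right (by linarith : 1 - v ≤ 1 - t) hD0
    have := mul_le_mul_of_nonneg_left hD (by linarith : (0:ℝ) ≤ 1 - v)
    have := phi_sub_pow_le (m := m) hv hv'0
    have := phi_sub_pow_self (m := m) v
    apply le_min <;> linarith
  · have := mul_le_mul_of_nonneg_left hD (by linarith : (0:ℝ) ≤ 1 - t)
    have := phi_sub_pow_le (m := m) ht0 hv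
    have := phi_sub_pow_le (m := m) ht0 hv'0
    apply le_min <;> linarith
  · exact absurd (‹t ≤ v›.trans hvv') h
  · have := mul_le_mul_of_nonneg_left hD (by linarith : (0:ℝ) ≤ 1 - t)
    have := mul_le_mul_of_nonneg_right (by linarith : 1 - t ≤ 1 - v')
      (mul_nonneg (by positivity : (0:ℝ) ≤ m + 1) (sub_nonneg.2 hpow))
    have := phi_sub_pow_le (m := m) hv'0 hv
    have := phi_sub_pow_self (m := m) v'
    apply le_min <;> linarith

end potential

structure IsPowerChain (m : ℕ) (C : ℝ) (u : ℕ → ℝ) : Prop where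
  zero : u 0 = 1
  last : u (m + 1) = 0
  mem : ∀ I ≤ m + 1, u I ∈ Set.Icc 0 1
  succ_le : ∀ I ≤ m, u (I + 1) ≤ u I
  chain : ∀ I ≤ m, m * u I ^ (m + 1) ≤ (m + 1) * u (I + 1) ^ m + C

namespace IsPowerChain

variable {m : ℕ} {C : ℝ} {u : ℕ → ℝ}

lemma const_nonneg (hu : IsPowerChain m C u) (hm : m ≠ 0) : 0 ≤ C := by
  have h := hu.chain m le_rfl
  rw [hu.last, zero_pow hm, mul_zero, zero_add] at h
  exact le_trans (mul_nonneg m.cast_nonneg (pow_nonneg (hu.mem m (by omega)).1 _)) h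

lemma one_sub_pow_le_sum_min (hu : IsPowerChain m C u) (hm : m ≠ 0) {t : ℝ} (ht0 : 0 ≤ t)
    (ht1 : t ≤ 1) :
    1 - t ^ (m + 1) ≤
      ∑ I ∈ range (m + 1), min (phi m (u I) - phi m (u (I + 1))) ((1 - t) * (C + phi m (u I))) := by
  have h := sub_le_sum_of_le_add (n := m + 1) (a := fun I => potential m t (u I)) fun I hI =>
    potential_le_add (hu.const_nonneg hm) (hu.mem (I + 1) (by omega)).1 (hu.succ_le I (by omega))
      (hu.mem I (by omega)).2 ht0 ht1 (hu.chain I (by omega))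
  simp only [hu.zero, hu.last, potential_one ht1] at h
  linarith [potential_zero_nonpos hm ht0 (m := m)]

end IsPowerChain

lemma iidLPFeasible_of_isPowerChain {m : ℕ} (hm : m ≠ 0) {θ : ℝ} (hθ : 0 < θ) {u : ℕ → ℝ}
    (hu : IsPowerChain m (1 / θ - 1) u) :
    IidLPFeasible (m + 1) θ fun i => θ * (phi m (u (i - 1)) - phi m (u i)) := by
  have hθC : θ * (1 / θ - 1) = 1 - θ := by field_simp
  have hθ1 : θ ≤ 1 := by nlinarith [hu.const_nonneg hm]
  have hpartial : ∀ k, ∑ i ∈ Icc 1 k, θ * (phi m (u (i - 1)) - phi m (u i)) =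
      θ * (1 - phi m (u k)) := by
    intro k; rw [← mul_sum, sum_Icc_one_sub (fun i => phi m (u i)), hu.zero, phi_one]
  refine ⟨fun i hi => ?_, ?_, fun κ hκ => ?_⟩
  · obtain ⟨hi1, hin⟩ := mem_Icc.1 hi
    have hsucc := hu.succ_le (i - 1) (by omega)
    rw [Nat.sub_add_cancel hi1] at hsucc
    exact mul_nonneg hθ.le (sub_nonneg.2 (phi_mono (hu.mem i hin).1 hsucc (hu.mem _ (by omega)).2))
  · rw [hpartial, hu.last, phi_zero hm]; linarith
  · have h := hu.one_sub_pow_le_sum_min hm (t := 1 - κ) (by linarith [hκ.2]) (by linarith [hκ.1])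
    rw [sub_sub_cancel] at h
    calc (1 - (1 - κ) ^ (m + 1)) * θ
        ≤ θ * ∑ I ∈ range (m + 1),
            min (phi m (u I) - phi m (u (I + 1))) (κ * (1 / θ - 1 + phi m (u I))) := by
          rw [mul_comm]; exact mul_le_mul_of_nonneg_left h hθ.le
      _ = _ := by
        rw [mul_sum, sum_Icc_one_eq_sum_range]
        refine sum_congr rfl fun i _ => ?_
        rw [hpartial, Nat.add_sub_cancel, mul_min_of_nonneg _ _ hθ.le]
        congr 1; linear_combination κ * hθC

lemma exists_antitone_relaxFeasible {m : ℕ} (hm : m ≠ 0) {θ : ℝ} {z : ℕ → ℝ}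
    (hz : RelaxFeasible (m + 1) θ z) :
    ∃ w, RelaxFeasible (m + 1) θ w ∧ ∀ I ≤ m, w (I + 1) ≤ w I := by
  simp_rw [relaxFeasible_succ_iff] at hz ⊢
  obtain ⟨h0, hlast, hmem, hc⟩ := hz
  have hm0 : (0 : ℝ) < m := by exact_mod_cast Nat.pos_of_ne_zero hm
  have hC : 0 ≤ 1 / θ - 1 := by
    have h := hc m le_rfl
    rw [hlast, mul_zero, zero_add] at h
    exact le_trans (mul_nonneg hm0.le (Real.rpow_nonneg (hmem m (by omega)).1 _)) h
  set w := suffixMax z (m + 1)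
  have hwmem : ∀ I, w I ∈ Set.Icc 0 1 := fun I => suffixMax_mem hmem
  refine ⟨w, ⟨le_antisymm (hwmem 0).2 (h0 ▸ le_suffixMax le_rfl (by omega)),
    suffixMax_self.trans hlast, fun I _ => hwmem I, fun I hI => ?_⟩, fun I _ => suffixMax_succ_le⟩
  have hw1 := (hwmem (I + 1)).2
  have hw0 := (hwmem (I + 1)).1
  rcases max_choice (z I) (w (I + 1)) with hmax | hmax <;>
    rw [show w I = _ from suffixMax_eq_max (by omega), hmax]
  · have : z (I + 1) ≤ w (I + 1) := le_suffixMax le_rfl (by omega)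
    nlinarith [hc I hI]
  · have : w (I + 1) ^ (((m : ℝ) + 1) / m) ≤ w (I + 1) := by
      refine (Real.rpow_le_rpow_of_exponent_ge' hw0 hw1 zero_le_one ?_).trans_eq (Real.rpow_one _)
      rw [le_div_iff₀ hm0]; linarith
    nlinarith

lemma isPowerChain_rpow_inv {m : ℕ} (hm : m ≠ 0) {θ : ℝ} {w : ℕ → ℝ}
    (hw : RelaxFeasible (m + 1) θ w) (hanti : ∀ I ≤ m, w (I + 1) ≤ w I) :
    IsPowerChain m (1 / θ - 1) fun I => w I ^ ((m : ℝ)⁻¹) := by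
  rw [relaxFeasible_succ_iff] at hw
  obtain ⟨h0, hlast, hmem, hc⟩ := hw
  have hinv : (0 : ℝ) < (m : ℝ)⁻¹ := inv_pos.2 (by exact_mod_cast Nat.pos_of_ne_zero hm)
  refine ⟨by simp [h0], by simp [hlast, hinv.ne'], fun I hI => ?_, fun I hI => ?_, fun I hI => ?_⟩
  · exact ⟨Real.rpow_nonneg (hmem I hI).1 _, Real.rpow_le_one (hmem I hI).1 (hmem I hI).2 hinv.le⟩
  · exact Real.rpow_le_rpow (hmem _ (by omega)).1 (hanti I hI) hinv.le
  · rw [rpow_inv_natCast_pow_succ (hmem I (by omega)).1,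
      Real.rpow_inv_natCast_pow (hmem _ (by omega)).1 hm]
    linarith [hc I hI]

lemma relaxFeasible_inv_succ (m : ℕ) :
    RelaxFeasible (m + 1) ((m : ℝ) + 1)⁻¹ fun I => if I ≤ m then 1 else 0 := by
  refine relaxFeasible_succ_iff.2 ⟨by simp, by simp, fun I _ => ?_, fun I hI => ?_⟩
  · split_ifs <;> simp
  · simp only [if_pos hI, Real.one_rpow, one_div, inv_inv]
    split_ifs <;> linarith

end ProphetLP

open ProphetLP in
/-- Lemma `LPequivalent`: `iidLP^{DP/Proph}_{1,n} = LPrelax_n`. -/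
theorem stmt17 (n : ℕ) (hn : 2 ≤ n) : iidLP1 n = LPrelax n := by
  obtain ⟨m, rfl⟩ : ∃ m, n = m + 1 := ⟨n - 1, by omega⟩
  have hm : m ≠ 0 := by omega
  change sSup {θ | ∃ y, IidLPFeasible (m + 1) θ y} =
    sSup {θ | 0 < θ ∧ ∃ z, RelaxFeasible (m + 1) θ z}
  refine csSup_eq_csSup_of_forall_exists_le ?_ ?_
  · rintro θ ⟨y, hy⟩
    rcases le_or_gt θ 0 with hθ | hθ
    · exact ⟨_, ⟨by positivity, _, relaxFeasible_inv_succ m⟩, hθ.trans (by positivity)⟩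
    · exact ⟨θ, ⟨hθ, exists_relaxFeasible_of_iidLPFeasible hm hθ hy⟩, le_rfl⟩
  · rintro θ ⟨hθ, z, hz⟩
    obtain ⟨w, hw, hanti⟩ := exists_antitone_relaxFeasible hm hz
    exact ⟨θ, ⟨_, iidLPFeasible_of_isPowerChain hm hθ (isPowerChain_rpow_inv hm hw hanti)⟩, le_rfl⟩
end

section
/- For every integer n ≥ 2, LPrelax_n ≥ LPrelax_{2n}. -/
open Real

lemma rpow_sub_rpow_le_mul_sub {q s t : ℝ} (hq : 1 ≤ q) (ht : 0 ≤ t) (hts : t ≤ s) (hs : s ≤ 1) :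
    s ^ q - t ^ q ≤ q * (s - t) := by
  obtain rfl | hs0 := (ht.trans hts).eq_or_lt
  · obtain rfl : t = 0 := le_antisymm hts ht
    simp
  have hbern : 1 + q * (t / s - 1) ≤ t ^ q / s ^ q := by
    rw [← div_rpow ht hs0.le]
    simpa using one_add_mul_self_le_rpow_one_add (s := t / s - 1)
      (by linarith [div_nonneg ht hs0.le]) hq
  have hsq : 0 < s ^ q := rpow_pos_of_pos hs0 q
  rw [le_div_iff₀ hsq] at hbern
  have hts' : 0 ≤ 1 - t / s := by rw [sub_nonneg]; exact div_le_one_of_le₀ hts hs0.le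
  calc s ^ q - t ^ q ≤ q * (1 - t / s) * s ^ q := by linarith
    _ ≤ q * (1 - t / s) * s := by gcongr; exact rpow_le_self_of_le_one hs0.le hs hq
    _ = q * (s - t) := by field_simp

lemma one_sub_mul_one_add_rpow_one_add_le_one {a : ℝ} (ha0 : 0 ≤ a) (ha1 : a ≤ 1) :
    (1 - a) * (1 + a) ^ (1 + a) ≤ 1 := by
  have h : (1 + a) ^ a ≤ 1 + a * a := rpow_one_add_le_one_add_mul_self (by linarith) ha0 ha1
  rw [rpow_add (by positivity), rpow_one]
  calc (1 - a) * ((1 + a) * (1 + a) ^ a) ≤ (1 - a) * ((1 + a) * (1 + a * a)) := by gcongr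
    _ = 1 - a ^ 4 := by ring
    _ ≤ 1 := by linarith [pow_nonneg ha0 4]

lemma one_sub_mul_rpow_one_add_le {a c u y : ℝ} (ha0 : 0 ≤ a) (ha1 : a ≤ 1) (hc : 0 ≤ c)
    (hu0 : 0 ≤ u) (hu1 : u ≤ 1) (hy : 0 ≤ y) (h : u ≤ (1 + a) * y + a * c) :
    (1 - a) * u ^ (1 + a) ≤ y ^ (1 + a) + a * c := by
  set p := 1 + a
  have hp : 0 < p := by positivity
  have hp1 : 1 ≤ p := le_add_of_nonneg_right ha0
  have hac : 0 ≤ a * c := mul_nonneg ha0 hc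
  set s := u / p with hs_def
  set t := max 0 ((u - a * c) / p)
  have hus : u = p * s := by rw [hs_def]; field_simp
  have hs0 : 0 ≤ s := by positivity
  have ht0 : 0 ≤ t := le_max_left _ _
  have hts : t ≤ s := max_le hs0 (div_le_div_of_nonneg_right (by linarith) hp.le)
  have hs1 : s ≤ 1 := by rw [div_le_one hp]; linarith
  have hty : t ≤ y := max_le hy (by rw [div_le_iff₀ hp]; linarith)
  have hst : p * (s - t) ≤ a * c := by
    calc p * (s - t) ≤ p * (s - (u - a * c) / p) := by gcongr; exact le_max_right _ _
      _ = a * c := by rw [hs_def]; field_simp; ring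
  calc (1 - a) * u ^ p = ((1 - a) * p ^ p) * s ^ p := by rw [hus, mul_rpow hp.le hs0]; ring
    _ ≤ s ^ p :=
      mul_le_of_le_one_left (by positivity) (one_sub_mul_one_add_rpow_one_add_le_one ha0 ha1)
    _ ≤ t ^ p + p * (s - t) := by linarith [rpow_sub_rpow_le_mul_sub hp1 ht0 hts hs1]
    _ ≤ y ^ p + a * c := add_le_add (rpow_le_rpow ht0 hty hp.le) hst

lemma le_of_two_step_constraints {N c x y v : ℝ} (hN : 1 < N) (hc : 0 ≤ c) (hx0 : 0 ≤ x)
    (hx1 : x ≤ 1) (hy : 0 ≤ y) (hxy : (2 * N - 1) * x ^ (2 * N / (2 * N - 1)) ≤ 2 * N * y + c)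
    (hyv : (2 * N - 1) * y ^ (2 * N / (2 * N - 1)) ≤ 2 * N * v + c) :
    (N - 1) * x ^ (N / (N - 1)) ≤ N * v + c := by
  have hm : 0 < 2 * N - 1 := by linarith
  obtain ⟨a, ha_def⟩ : ∃ a, a = 1 / (2 * N - 1) := ⟨_, rfl⟩
  have ham : a * (2 * N - 1) = 1 := by rw [ha_def]; field_simp
  have ha0 : 0 ≤ a := by rw [ha_def]; exact one_div_nonneg.mpr hm.le
  have ha1 : a ≤ 1 := by rw [ha_def, div_le_one hm]; linarith
  have hexp : 2 * N / (2 * N - 1) = 1 + a := by rw [ha_def]; field_simp; ring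
  have hexp_le : (1 + a) * (1 + a) ≤ N / (N - 1) := by
    rw [← hexp, div_mul_div_comm, div_le_div_iff₀ (by positivity) (by linarith)]
    nlinarith
  rw [hexp] at hxy hyv
  have hkey := one_sub_mul_rpow_one_add_le ha0 ha1 hc (rpow_nonneg hx0 (1 + a))
    (rpow_le_one hx0 hx1 (by linarith)) hy
    (by linear_combination a * hxy + (y - x ^ (1 + a)) * ham)
  have hmono : x ^ (N / (N - 1)) ≤ (x ^ (1 + a)) ^ (1 + a) := by
    rw [← rpow_mul hx0]
    exact rpow_le_rpow_of_exponent_ge' hx0 hx1 (by positivity) hexp_le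
  linear_combination (N - 1) * hmono + (2 * N - 1) / 2 * hkey + hyv / 2
    + ((x ^ (1 + a)) ^ (1 + a) + c) / 2 * ham

def LPrelaxFeasible (n : ℕ) (θ : ℝ) (z : ℕ → ℝ) : Prop :=
  z 0 = 1 ∧ z n = 0 ∧ (∀ i, 1 ≤ i → i ≤ n - 1 → z i ∈ Set.Icc (0:ℝ) 1) ∧
    (∀ I, I ≤ n - 1 →
      ((n : ℝ) - 1) * z I ^ ((n : ℝ) / ((n : ℝ) - 1)) ≤ (n : ℝ) * z (I+1) + 1/θ - 1)

lemma LPrelax_eq_sSup (n : ℕ) :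
    LPrelax n = sSup {θ : ℝ | 0 < θ ∧ ∃ z, LPrelaxFeasible n θ z} := rfl

namespace LPrelaxFeasible

variable {n : ℕ} {θ : ℝ} {z : ℕ → ℝ}

lemma mem_Icc (h : LPrelaxFeasible n θ z) {i : ℕ} (hi : i ≤ n - 1) : z i ∈ Set.Icc (0:ℝ) 1 := by
  rcases Nat.eq_zero_or_pos i with rfl | hi0
  · simp [h.1]
  · exact h.2.2.1 i hi0 hi

lemma one_le_one_div (hn : 2 ≤ n) (h : LPrelaxFeasible n θ z) : 1 ≤ 1 / θ := by
  have hlast := h.2.2.2 (n - 1) le_rfl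
  rw [Nat.sub_add_cancel (by omega), h.2.1, mul_zero] at hlast
  have hn' : (2:ℝ) ≤ n := by exact_mod_cast hn
  have hz := (h.mem_Icc (i := n - 1) le_rfl).1
  have := mul_nonneg (by linarith : (0:ℝ) ≤ n - 1) (rpow_nonneg hz ((n:ℝ) / (n - 1)))
  linarith

lemma comp_two_mul (hn : 2 ≤ n) (h : LPrelaxFeasible (2 * n) θ z) :
    LPrelaxFeasible n θ (fun i => z (2 * i)) := by
  refine ⟨h.1, h.2.1, fun i hi1 hi => h.2.2.1 (2 * i) (by omega) (by omega), fun I hI => ?_⟩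
  have hN : (1:ℝ) < n := by exact_mod_cast hn
  have hx := h.mem_Icc (i := 2 * I) (by omega)
  have hy := h.mem_Icc (i := 2 * I + 1) (by omega)
  have hxy := h.2.2.2 (2 * I) (by omega)
  have hyv := h.2.2.2 (2 * I + 1) (by omega)
  push_cast at hxy hyv
  rw [add_sub_assoc] at hxy hyv ⊢
  show _ ≤ _ * z (2 * (I + 1)) + _
  rw [show 2 * (I + 1) = 2 * I + 1 + 1 by ring]
  have hc : 0 ≤ 1 / θ - 1 := sub_nonneg.mpr (h.one_le_one_div (by omega))
  exact le_of_two_step_constraints hN hc hx.1 hx.2 hy.1 hxy hyv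

end LPrelaxFeasible

/-- Lemma `Incn`: `LPrelax_n ≥ LPrelax_{2n}`. -/
theorem stmt18 (n : ℕ) (hn : 2 ≤ n) : LPrelax n ≥ LPrelax (2 * n) := by
  rw [ge_iff_le, LPrelax_eq_sSup, LPrelax_eq_sSup]
  have hbdd : BddAbove {θ : ℝ | 0 < θ ∧ ∃ z, LPrelaxFeasible n θ z} :=
    ⟨1, fun θ ⟨hθ, z, hz⟩ => (one_le_div hθ).mp (hz.one_le_one_div hn)⟩
  exact Real.sSup_le (fun θ ⟨hθ, z, hz⟩ => le_csSup hbdd ⟨hθ, _, hz.comp_two_mul hn⟩)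
    (Real.sSup_nonneg fun θ hθ => hθ.1.le)
end
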